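/- arXiv:math-ph/0512088 — 5 statements merged into one kernel-verified Lean document; each statement's English description precedes it below -/
import Mathlib

section
/- Let n ≥ 3 and let T be a real n×n matrix. If tr(T(U − I)) = 0 for every U ∈ SO(n), then T = 0. Consequently, every real n×n matrix can be written as a real linear combination c₁(U₁ − I) + ⋯ + c_N(U_N − I) with U₁,…,U_N ∈ SO(n). -/
open Matrix

variable {n : ℕ}

lemma sgnperm_entry (σ : Equiv.Perm (Fin n)) (d : Fin n → ℝ) (a b : Fin n) :
    (σ.permMatrix ℝ * diagonal d) a b = if σ a = b then d b else 0 := by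
  simp [Matrix.mul_apply, Matrix.diagonal, Equiv.Perm.permMatrix, PEquiv.toMatrix_apply,
    Equiv.toPEquiv, Finset.sum_ite_eq, ite_and]

lemma sgnperm_orth (σ : Equiv.Perm (Fin n)) {U : Matrix (Fin n) (Fin n) ℝ} {d : Fin n → ℝ}
    (hU : ∀ a b, U a b = if σ a = b then d b else 0)
    (hd : ∀ i, d i = 1 ∨ d i = -1) : Uᵀ * U = 1 := by
  ext a b
  simp only [Matrix.mul_apply, Matrix.transpose_apply, hU, Matrix.one_apply]
  rw [Finset.sum_eq_single (σ.symm a)]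
  · rcases eq_or_ne a b with rfl | hab
    · simp only [Equiv.apply_symm_apply, if_pos rfl]
      rcases hd a with h | h <;> simp [h]
    · simp only [Equiv.apply_symm_apply, if_pos rfl]
      rw [if_neg hab, if_neg hab]
      ring
  · intro j _ hj
    rw [if_neg (fun h => hj (by simpa using congrArg σ.symm h))]
    ring
  · simp

lemma sgnperm_det (σ : Equiv.Perm (Fin n)) {U : Matrix (Fin n) (Fin n) ℝ} {d : Fin n → ℝ}
    (hU : ∀ a b, U a b = if σ a = b then d b else 0) :
    U.det = (Equiv.Perm.sign σ : ℤ) * ∏ i, d i := by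
  have : U = σ.permMatrix ℝ * diagonal d := by
    ext a b; rw [hU, sgnperm_entry]
  rw [this, Matrix.det_mul, Matrix.det_permutation, Matrix.det_diagonal]

lemma sgnperm_tr (σ : Equiv.Perm (Fin n)) {U : Matrix (Fin n) (Fin n) ℝ} {d : Fin n → ℝ}
    (hU : ∀ a b, U a b = if σ a = b then d b else 0)
    (T : Matrix (Fin n) (Fin n) ℝ) :
    trace (T * U) = ∑ i, d i * T i (σ.symm i) := by
  rw [Matrix.trace]
  simp only [Matrix.diag_apply, Matrix.mul_apply, hU]
  refine Finset.sum_congr rfl fun i _ => ?_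
  rw [Finset.sum_eq_single (σ.symm i)]
  · simp [mul_comm]
  · intro j _ hj
    rw [if_neg (fun h => hj (by simpa using congrArg σ.symm h))]
    ring
  · simp

lemma pm_mul {a b : ℝ} (ha : a = 1 ∨ a = -1) (hb : b = 1 ∨ b = -1) :
    a * b = 1 ∨ a * b = -1 := by
  rcases ha with rfl | rfl <;> rcases hb with rfl | rfl <;> norm_num

lemma part1 (hn : 3 ≤ n) (T : Matrix (Fin n) (Fin n) ℝ)
    (hT : ∀ U : Matrix (Fin n) (Fin n) ℝ, Uᵀ * U = 1 → U.det = 1 →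
      Matrix.trace (T * (U - 1)) = 0) : T = 0 := by
  -- generic consequence
  have htr : ∀ (σ : Equiv.Perm (Fin n)) (d : Fin n → ℝ), (∀ i, d i = 1 ∨ d i = -1) →
      ((Equiv.Perm.sign σ : ℤ) : ℝ) * ∏ i, d i = 1 →
      ∑ i, d i * T i (σ.symm i) = trace T := by
    intro σ d hd hdet
    set U : Matrix (Fin n) (Fin n) ℝ := Matrix.of fun a b => if σ a = b then d b else 0 with hUdef
    have hU : ∀ a b, U a b = if σ a = b then d b else 0 := fun a b => rfl
    have h := hT U (sgnperm_orth σ hU hd) (by rw [sgnperm_det σ hU]; exact hdet)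
    rw [Matrix.mul_sub, Matrix.mul_one, Matrix.trace_sub, sub_eq_zero, sgnperm_tr σ hU] at h
    exact h
  -- existence of extra indices
  have hexists : ∀ i j : Fin n, ∃ k : Fin n, k ≠ i ∧ k ≠ j := by
    intro i j
    by_contra hc
    push_neg at hc
    have hsub : (Finset.univ : Finset (Fin n)) ⊆ {i, j} := by
      intro k _
      rcases hc k with h
      by_cases hk : k = i
      · simp [hk]
      · simp [h hk]
    have := Finset.card_le_card hsub
    simp only [Finset.card_univ, Fintype.card_fin] at this
    have h2 : ({i, j} : Finset (Fin n)).card ≤ 2 := Finset.card_insert_le _ _ |>.trans (by simp)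
    omega
  -- family A : diagonal pairs
  have hA : ∀ i j : Fin n, i ≠ j → T i i + T j j = 0 := by
    intro i j hij
    have h := htr 1 (fun m => (if m = i then -1 else 1) * (if m = j then -1 else 1))
      (fun m => pm_mul (by rcases eq_or_ne m i with h1 | h1 <;> simp [h1])
        (by rcases eq_or_ne m j with h2 | h2 <;> simp [h2]))
      (by
        rw [Finset.prod_mul_distrib]
        simp [Finset.prod_ite_eq'])
    have hre : ∀ m : Fin n, ((if m = i then (-1:ℝ) else 1) * (if m = j then -1 else 1)) *
        T m ((1 : Equiv.Perm (Fin n)).symm m)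
        = T m m + ((if m = i then -2 * T i i else 0) + (if m = j then -2 * T j j else 0)) := by
      intro m
      rcases eq_or_ne m i with rfl | h1
      · simp [if_neg hij, Equiv.Perm.one_symm]; ring
      · rcases eq_or_ne m j with rfl | h2
        · simp [if_neg h1, Equiv.Perm.one_symm]; ring
        · simp [h1, h2, Equiv.Perm.one_symm]
    rw [Finset.sum_congr rfl fun m _ => hre m] at h
    simp [Finset.sum_add_distrib, Matrix.trace, Matrix.diag] at h
    linarith
  have hdiag : ∀ i : Fin n, T i i = 0 := by
    intro i
    obtain ⟨j, hji, _⟩ := hexists i i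
    obtain ⟨k, hki, hkj⟩ := hexists i j
    have h1 := hA i j (Ne.symm hji)
    have h2 := hA i k (Ne.symm hki)
    have h3 := hA j k (Ne.symm hkj)
    linarith
  -- families B and C : off-diagonal
  have hoff : ∀ i j : Fin n, i ≠ j → T i j = 0 := by
    intro i j hij
    obtain ⟨k, hki, hkj⟩ := hexists i j
    -- C : rotation by π/2 in the (i,j)-plane
    have hC := htr (Equiv.swap i j) (fun m => if m = j then -1 else 1)
      (fun m => by rcases eq_or_ne m j with h | h <;> simp [h])
      (by simp [Finset.prod_ite_eq', Equiv.Perm.sign_swap hij])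
    have hreC : ∀ m : Fin n, (if m = j then (-1:ℝ) else 1) * T m ((Equiv.swap i j).symm m)
        = T m m + ((if m = i then T i j - T i i else 0) +
          (if m = j then -T j i - T j j else 0)) := by
      intro m
      rcases eq_or_ne m i with rfl | h1
      · simp [if_neg hij, Equiv.swap_apply_left]
      · rcases eq_or_ne m j with rfl | h2
        · simp [if_neg h1, Equiv.swap_apply_right]
        · simp [h1, h2, Equiv.swap_apply_of_ne_of_ne h1 h2]
    rw [Finset.sum_congr rfl fun m _ => hreC m] at hC
    simp [Finset.sum_add_distrib, Matrix.trace, Matrix.diag, if_neg hij] at hC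
    -- B : swap i j with a sign flip at k
    have hB := htr (Equiv.swap i j) (fun m => if m = k then -1 else 1)
      (fun m => by rcases eq_or_ne m k with h | h <;> simp [h])
      (by simp [Finset.prod_ite_eq', Equiv.Perm.sign_swap hij])
    have hreB : ∀ m : Fin n, (if m = k then (-1:ℝ) else 1) * T m ((Equiv.swap i j).symm m)
        = T m m + ((if m = i then T i j - T i i else 0) +
          ((if m = j then T j i - T j j else 0) + (if m = k then -2 * T k k else 0))) := by
      intro m
      rcases eq_or_ne m i with rfl | h1
      · simp [if_neg hij, if_neg (Ne.symm hki), Equiv.swap_apply_left]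
      · rcases eq_or_ne m j with rfl | h2
        · simp [if_neg h1, if_neg (Ne.symm hkj), Equiv.swap_apply_right]
        · rcases eq_or_ne m k with rfl | h3
          · simp [h1, h2, Equiv.swap_apply_of_ne_of_ne h1 h2]; ring
          · simp [h1, h2, h3, Equiv.swap_apply_of_ne_of_ne h1 h2]
    rw [Finset.sum_congr rfl fun m _ => hreB m] at hB
    simp [Finset.sum_add_distrib, Matrix.trace, Matrix.diag, if_neg hij] at hB
    have di := hdiag i; have dj := hdiag j; have dk := hdiag k
    linarith
  ext i j
  rcases eq_or_ne i j with rfl | hij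
  · simpa using hdiag i
  · simpa using hoff i j hij

lemma part2 (hn : 3 ≤ n) (T : Matrix (Fin n) (Fin n) ℝ) :
    ∃ (N : ℕ) (U : Fin N → Matrix (Fin n) (Fin n) ℝ)
      (c : Fin N → ℝ), (∀ k, (U k)ᵀ * U k = 1 ∧ (U k).det = 1) ∧
        T = ∑ k, c k • (U k - 1) := by
  set s : Set (Matrix (Fin n) (Fin n) ℝ) :=
    {X | ∃ U : Matrix (Fin n) (Fin n) ℝ, Uᵀ * U = 1 ∧ U.det = 1 ∧ X = U - 1} with hs
  have hspan : Submodule.span ℝ s = ⊤ := by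
    by_contra hne
    obtain ⟨f, hf0, hfbot⟩ := (Submodule.span ℝ s).exists_dual_map_eq_bot_of_lt_top
      (lt_top_iff_ne_top.mpr hne) inferInstance
    have hfs : ∀ X ∈ s, f X = 0 := by
      intro X hX
      have : f X ∈ (Submodule.span ℝ s).map f := ⟨X, Submodule.subset_span hX, rfl⟩
      rw [hfbot] at this
      simpa using this
    set Tf : Matrix (Fin n) (Fin n) ℝ := Matrix.of fun i j => f (Matrix.single j i 1) with hTf
    have htrf : ∀ X : Matrix (Fin n) (Fin n) ℝ, trace (Tf * X) = f X := by
      intro X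
      conv_rhs => rw [matrix_eq_sum_single X]
      rw [map_sum]
      rw [Matrix.trace]
      simp only [Matrix.diag_apply, Matrix.mul_apply]
      rw [Finset.sum_comm]
      refine Finset.sum_congr rfl fun j _ => ?_
      rw [map_sum]
      refine Finset.sum_congr rfl fun i _ => ?_
      have : Matrix.single j i (X j i) = X j i • Matrix.single j i 1 := by
        ext a b
        simp [Matrix.single]
      rw [this, _root_.map_smul]
      simp [hTf, mul_comm]
    have hTf0 : Tf = 0 := by
      refine part1 hn Tf fun U hU hdet => ?_
      rw [htrf]
      exact hfs _ ⟨U, hU, hdet, rfl⟩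
    apply hf0
    ext X
    rw [← htrf X, hTf0]
    simp
  have hmem : T ∈ Submodule.span ℝ s := hspan ▸ Submodule.mem_top
  obtain ⟨N, c, g, hsum⟩ := Submodule.mem_span_set'.mp hmem
  refine ⟨N, fun k => Classical.choose (g k).2, c, fun k => ?_, ?_⟩
  · obtain ⟨h1, h2, _⟩ := Classical.choose_spec (g k).2
    exact ⟨h1, h2⟩
  · rw [← hsum]
    refine Finset.sum_congr rfl fun k _ => ?_
    obtain ⟨_, _, h3⟩ := Classical.choose_spec (g k).2
    rw [h3]

theorem stmt0 (n : ℕ) (hn : 3 ≤ n) :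
    (∀ T : Matrix (Fin n) (Fin n) ℝ,
      (∀ U : Matrix (Fin n) (Fin n) ℝ, Uᵀ * U = 1 → U.det = 1 →
        Matrix.trace (T * (U - 1)) = 0) → T = 0) ∧
    (∀ T : Matrix (Fin n) (Fin n) ℝ, ∃ (N : ℕ) (U : Fin N → Matrix (Fin n) (Fin n) ℝ)
      (c : Fin N → ℝ), (∀ k, (U k)ᵀ * U k = 1 ∧ (U k).det = 1) ∧
        T = ∑ k, c k • (U k - 1)) := by
  exact ⟨part1 hn, part2 hn⟩
end

section
/- The improper integral ∫₀^∞ x³/(eˣ − 1) dx equals π⁴/15. -/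
open Real MeasureTheory

lemma integrable_aux (n : ℕ) :
    IntegrableOn (fun x : ℝ => x ^ 3 * Real.exp (-(((n : ℝ) + 1) * x)))
      (Set.Ioi 0) := by
  have h := integrableOn_rpow_mul_exp_neg_mul_rpow (p := 1) (s := 3)
    (b := (n : ℝ) + 1) (by norm_num) one_pos (by positivity)
  refine h.congr_fun (fun x hx => ?_) measurableSet_Ioi
  dsimp only
  rw [Real.rpow_one, neg_mul, show (3 : ℝ) = ((3 : ℕ) : ℝ) by norm_num,
    Real.rpow_natCast]

lemma gamma_four : Real.Gamma 4 = 6 := by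
  rw [show (4 : ℝ) = ((3 : ℕ) : ℝ) + 1 by norm_num, Real.Gamma_nat_eq_factorial]
  norm_num [Nat.factorial]

lemma integral_aux (n : ℕ) :
    ∫ x in Set.Ioi (0 : ℝ), x ^ 3 * Real.exp (-(((n : ℝ) + 1) * x))
      = 6 / ((n : ℝ) + 1) ^ 4 := by
  have h := integral_rpow_mul_exp_neg_mul_Ioi (a := 4) (r := (n : ℝ) + 1)
    (by norm_num) (by positivity)
  rw [show (4 : ℝ) - 1 = 3 by norm_num] at h
  rw [show (∫ x in Set.Ioi (0:ℝ), x ^ 3 * Real.exp (-(((n : ℝ) + 1) * x)))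
      = ∫ x in Set.Ioi (0:ℝ), x ^ (3:ℝ) * Real.exp (-(((n : ℝ) + 1) * x)) from
    setIntegral_congr_fun measurableSet_Ioi (fun x hx => by
      rw [show (3 : ℝ) = ((3 : ℕ) : ℝ) by norm_num, Real.rpow_natCast]), h,
    gamma_four,
    show ((1:ℝ)/((n:ℝ)+1)) ^ (4:ℝ) = ((1:ℝ)/((n:ℝ)+1)) ^ (4:ℕ) by
      rw [show (4 : ℝ) = ((4 : ℕ) : ℝ) by norm_num, Real.rpow_natCast]]
  have : ((n:ℝ)+1) ≠ 0 := by positivity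
  field_simp

lemma hz : HasSum (fun n : ℕ => 6 / ((n : ℝ) + 1) ^ 4) (π ^ 4 / 15) := by
  have h1 := ((hasSum_nat_add_iff' (f := fun n : ℕ => (1:ℝ) / (n:ℝ) ^ 4) 1).mpr
    hasSum_zeta_four).mul_left 6
  convert h1 using 1
  · rfl
  · funext n; push_cast; ring
  · rw [Finset.sum_range_one]
    norm_num
    ring

theorem stmt2 :
    ∫ x in Set.Ioi (0 : ℝ), x ^ 3 / (Real.exp x - 1) = π ^ 4 / 15 := by
  have key := hasSum_integral_of_summable_integral_norm
    (μ := volume.restrict (Set.Ioi 0))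
    (F := fun (n : ℕ) (x : ℝ) => x ^ 3 * Real.exp (-(((n : ℝ) + 1) * x)))
    integrable_aux ?_
  · have heq : (fun n : ℕ => ∫ x in Set.Ioi (0:ℝ),
        x ^ 3 * Real.exp (-(((n : ℝ) + 1) * x))) = fun n : ℕ => 6 / ((n : ℝ) + 1) ^ 4 := by
      funext n; exact integral_aux n
    rw [heq] at key
    have hval := key.unique hz
    rw [← hval]
    refine setIntegral_congr_fun measurableSet_Ioi (fun x hx => ?_)
    have hx0 : (0:ℝ) < x := hx
    have hr1 : Real.exp (-x) < 1 := Real.exp_lt_one_iff.mpr (by linarith)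
    have hg := hasSum_geometric_of_lt_one (Real.exp_nonneg (-x)) hr1
    have hg2 := (hg.mul_left (x ^ 3 * Real.exp (-x)))
    have hfun : ∀ n : ℕ, x ^ 3 * Real.exp (-x) * Real.exp (-x) ^ n
        = x ^ 3 * Real.exp (-(((n : ℝ) + 1) * x)) := by
      intro n
      rw [← Real.exp_nat_mul, mul_assoc, ← Real.exp_add]
      ring_nf
    rw [funext hfun] at hg2
    have hne : Real.exp x - 1 ≠ 0 := by
      have : 1 < Real.exp x := Real.one_lt_exp_iff.mpr hx0
      linarith
    have hne2 : 1 - Real.exp (-x) ≠ 0 := by linarith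
    rw [hg2.tsum_eq, Real.exp_neg]
    rw [div_eq_iff hne]
    have h3 : (1 - (Real.exp x)⁻¹) ≠ 0 := by
      rw [← Real.exp_neg]; exact hne2
    field_simp
  · have : (fun n : ℕ => ∫ x in Set.Ioi (0:ℝ),
        ‖x ^ 3 * Real.exp (-(((n : ℝ) + 1) * x))‖) = fun n : ℕ => 6 / ((n : ℝ) + 1) ^ 4 := by
      funext n
      rw [← integral_aux n]
      refine setIntegral_congr_fun measurableSet_Ioi (fun x hx => ?_)
      have hx0 : (0:ℝ) < x := hx
      rw [Real.norm_of_nonneg (by positivity)]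
    rw [this]
    exact hz.summable
end

section
/- The improper integral ∫₀^∞ x⁴eˣ/(eˣ − 1)² dx equals 4π⁴/15. -/
open Real MeasureTheory

theorem stmt3 :
    ∫ x in Set.Ioi (0 : ℝ), x ^ 4 * Real.exp x / (Real.exp x - 1) ^ 2 = 4 * π ^ 4 / 15 := by
  set F : ℝ → ℂ := fun t ↦ ((Real.exp t / (Real.exp t - 1) ^ 2 : ℝ) : ℂ) with hFdef
  have hp : ∀ n : ℕ, ((n : ℂ) = 0) ∨ (0 : ℝ) < (n : ℝ) := by
    intro n
    rcases Nat.eq_zero_or_pos n with h | h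
    · exact Or.inl (by simp [h])
    · exact Or.inr (by exact_mod_cast h)
  have hs : 0 < (5 : ℂ).re := by norm_num
  have hF : ∀ t ∈ Set.Ioi (0 : ℝ),
      HasSum (fun n : ℕ ↦ (n : ℂ) * Real.exp (-(n : ℝ) * t)) (F t) := by
    intro t ht
    rw [Set.mem_Ioi] at ht
    have hr : ‖Real.exp (-t)‖ < 1 := by
      rw [Real.norm_eq_abs, abs_of_pos (Real.exp_pos _)]
      exact Real.exp_lt_one_iff.mpr (by linarith)
    have h1 : HasSum (fun n : ℕ ↦ (n : ℝ) * Real.exp (-t) ^ n)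
        (Real.exp (-t) / (1 - Real.exp (-t)) ^ 2) :=
      hasSum_coe_mul_geometric_of_norm_lt_one hr
    have h2 : HasSum (fun n : ℕ ↦ (n : ℝ) * Real.exp (-(n : ℝ) * t))
        (Real.exp t / (Real.exp t - 1) ^ 2) := by
      have he : Real.exp (-t) / (1 - Real.exp (-t)) ^ 2
          = Real.exp t / (Real.exp t - 1) ^ 2 := by
        have h0 : Real.exp t ≠ 0 := (Real.exp_pos t).ne'
        have h1' : Real.exp t - 1 ≠ 0 := by
          have h1 : 1 < Real.exp t := by
            rw [← Real.exp_zero]; exact Real.exp_lt_exp.mpr ht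
          linarith
        have h2' : 1 - Real.exp (-t) ≠ 0 := by
          have hlt : Real.exp (-t) < 1 := Real.exp_lt_one_iff.mpr (by linarith)
          linarith
        rw [Real.exp_neg]
        field_simp
      rw [← he]
      refine h1.congr_fun fun n ↦ ?_
      congr 1
      rw [← Real.exp_nat_mul]
      ring_nf
    have h3 : HasSum (fun n : ℕ ↦ ((((n : ℝ)) * Real.exp (-(n : ℝ) * t) : ℝ) : ℂ)) (F t) :=
      Complex.ofRealCLM.hasSum h2
    refine h3.congr_fun fun n ↦ ?_
    push_cast
    ring
  have h_sum : Summable fun n : ℕ ↦ ‖(n : ℂ)‖ / (n : ℝ) ^ (5 : ℂ).re := by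
    have : Summable fun n : ℕ ↦ (n : ℝ) ^ (-4 : ℝ) :=
      Real.summable_nat_rpow.mpr (by norm_num)
    refine this.congr fun n ↦ ?_
    rcases Nat.eq_zero_or_pos n with h | h
    · simp [h, Real.zero_rpow]
    · have hn : (0 : ℝ) < n := by exact_mod_cast h
      rw [Complex.norm_natCast]
      rw [show ((-4 : ℝ)) = 1 - 5 by norm_num, Real.rpow_sub hn, Real.rpow_one]
      simp [div_eq_mul_inv]
  have key := hasSum_mellin (F := F) (a := fun n : ℕ ↦ (n : ℂ)) (p := fun n : ℕ ↦ (n : ℝ))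
    hp hs hF h_sum
  -- evaluate the sum
  have hsumval : HasSum (fun n : ℕ ↦ Complex.Gamma 5 * (n : ℂ) / ((n : ℝ) : ℂ) ^ (5 : ℂ))
      ((4 * π ^ 4 / 15 : ℝ) : ℂ) := by
    have hz : HasSum (fun n : ℕ ↦ ((1 / (n : ℝ) ^ 4 : ℝ) : ℂ)) ((π ^ 4 / 90 : ℝ) : ℂ) :=
      Complex.ofRealCLM.hasSum hasSum_zeta_four
    have hz24 := hz.mul_left (24 : ℂ)
    have hval : ((4 * π ^ 4 / 15 : ℝ) : ℂ) = 24 * ((π ^ 4 / 90 : ℝ) : ℂ) := by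
      push_cast; ring
    rw [hval]
    refine hz24.congr_fun fun n ↦ ?_
    have hG : Complex.Gamma 5 = 24 := by
      have := Complex.Gamma_nat_eq_factorial 4
      norm_num at this
      rw [show (5 : ℂ) = (4 : ℕ) + 1 by norm_num, Complex.Gamma_nat_eq_factorial]
      norm_num [Nat.factorial]
    rw [hG]
    rcases Nat.eq_zero_or_pos n with h | h
    · simp [h]
    · have hn : ((n : ℝ) : ℂ) ^ (5 : ℂ) = (n : ℂ) ^ (5 : ℕ) := by
        rw [show ((5 : ℂ)) = ((5 : ℕ) : ℂ) by norm_num, Complex.cpow_natCast]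
        norm_num
      rw [hn]
      have hn0 : (n : ℂ) ≠ 0 := Nat.cast_ne_zero.mpr h.ne'
      push_cast
      field_simp
  have hmval : mellin F 5 = ((4 * π ^ 4 / 15 : ℝ) : ℂ) := key.unique hsumval
  -- relate mellin to the real integral
  have hmel : mellin F 5 = ((∫ x in Set.Ioi (0 : ℝ),
      x ^ 4 * Real.exp x / (Real.exp x - 1) ^ 2 : ℝ) : ℂ) := by
    rw [mellin]
    have hcast : ((∫ x in Set.Ioi (0 : ℝ), x ^ 4 * Real.exp x / (Real.exp x - 1) ^ 2 : ℝ) : ℂ)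
        = ∫ x in Set.Ioi (0 : ℝ), ((x ^ 4 * Real.exp x / (Real.exp x - 1) ^ 2 : ℝ) : ℂ) :=
      integral_ofReal.symm
    rw [hcast]
    refine setIntegral_congr_fun measurableSet_Ioi fun t ht ↦ ?_
    rw [Set.mem_Ioi] at ht
    have h4 : ((t : ℂ)) ^ ((5 : ℂ) - 1) = (((t ^ 4 : ℝ)) : ℂ) := by
      rw [show ((5 : ℂ) - 1) = ((4 : ℕ) : ℂ) by norm_num, Complex.cpow_natCast]
      push_cast; ring
    rw [smul_eq_mul, h4, hFdef]
    push_cast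
    ring
  have := hmel ▸ hmval
  exact_mod_cast this
end

section
/- Let φ : [0,∞) → [0,∞) be a nondecreasing right-continuous function with φ(λ) bounded, φ(0) = 0, and suppose φ(λ) ~ c₀ λ^{3/2} as λ → 0⁺ for some c₀ > 0. Define U₁(T) = ∫₀^∞ ℏ√λ / (e^{ℏ√λ/(KT)} − 1) dφ(λ) for T > 0, where ℏ, K > 0. Then lim_{T→0⁺} U₁(T)/T⁴ = (π⁴/5)·c₀·ℏ^{−3}·K⁴. -/
open Real MeasureTheory Filter Set Topology

noncomputable def GG (x : ℝ) : ℝ := x / (Real.exp x - 1)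
noncomputable def DD (x : ℝ) : ℝ := (x * Real.exp x - (Real.exp x - 1)) / (Real.exp x - 1) ^ 2

lemma expm1_pos {x : ℝ} (hx : 0 < x) : 0 < Real.exp x - 1 := by
  have := Real.add_one_le_exp x; nlinarith

lemma GG_nonneg {x : ℝ} (hx : 0 ≤ x) : 0 ≤ GG x := by
  rcases hx.eq_or_lt with rfl | hx
  · simp [GG]
  · exact div_nonneg hx.le (expm1_pos hx).le

lemma DD_nonneg {x : ℝ} (hx : 0 ≤ x) : 0 ≤ DD x := by
  apply div_nonneg _ (sq_nonneg _)
  have h1 := Real.add_one_le_exp (-x)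
  have h2 : Real.exp (-x) * Real.exp x = 1 := by
    rw [← Real.exp_add]; simp
  have h3 := Real.exp_pos x
  nlinarith

lemma one_add_le_exp' (x : ℝ) : Real.exp (-x) * (1 + x) ≤ 1 := by
  have h1 := Real.add_one_le_exp x
  have h2 : Real.exp (-x) * Real.exp x = 1 := by rw [← Real.exp_add]; simp
  have h3 := Real.exp_pos (-x)
  nlinarith

lemma DD_le {x : ℝ} (hx : 0 < x) : DD x ≤ (1 + x) ^ 2 * Real.exp (-x) := by
  have hE := expm1_pos hx
  have h2 : Real.exp (-x) * Real.exp x = 1 := by rw [← Real.exp_add]; simp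
  have h3 := Real.exp_pos x
  have h4 := Real.exp_pos (-x)
  have h5 := one_add_le_exp' x
  have h6 := Real.add_one_le_exp (-x)
  -- e^{-x} ≥ 1 - x, so x - 1 + e^{-x} ≤ x²... numerator ≤ x² e^x
  have hnum : x * Real.exp x - (Real.exp x - 1) ≤ x ^ 2 * Real.exp x := by nlinarith
  have hden : x * Real.exp x ≤ (1 + x) * (Real.exp x - 1) := by nlinarith
  have hden2 : (x * Real.exp x) ^ 2 ≤ ((1 + x) * (Real.exp x - 1)) ^ 2 := by
    apply sq_le_sq' <;> nlinarith
  rw [DD, div_le_iff₀ (by positivity)]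
  calc x * Real.exp x - (Real.exp x - 1) ≤ x ^ 2 * Real.exp x := hnum
    _ = Real.exp (-x) * (x * Real.exp x) ^ 2 := by nlinarith [sq_nonneg x]
    _ ≤ Real.exp (-x) * ((1 + x) * (Real.exp x - 1)) ^ 2 := by nlinarith
    _ = (1 + x) ^ 2 * Real.exp (-x) * (Real.exp x - 1) ^ 2 := by ring

lemma GG_le {x : ℝ} (hx : 0 < x) : GG x ≤ (1 + x) * Real.exp (-x) := by
  have hE := expm1_pos hx
  have h2 : Real.exp (-x) * Real.exp x = 1 := by rw [← Real.exp_add]; simp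
  have h5 := one_add_le_exp' x
  have h4 := Real.exp_pos (-x)
  rw [GG, div_le_iff₀ hE]
  nlinarith

lemma hasDerivAt_GG {x : ℝ} (hx : 0 < x) : HasDerivAt GG (-DD x) x := by
  have hE := expm1_pos hx
  have h := (hasDerivAt_id x).div ((Real.hasDerivAt_exp x).sub_const 1) hE.ne'
  refine h.congr_deriv (Eq.symm ?_)
  rw [DD]; field_simp
  simp only [id]; ring

lemma integrableOn_pow_exp (n : ℕ) :
    IntegrableOn (fun x : ℝ => x ^ n * Real.exp (-x)) (Ioi 0) := by
  have h := integrableOn_rpow_mul_exp_neg_mul_rpow (p := 1) (s := n) (b := 1)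
    (lt_of_lt_of_le neg_one_lt_zero (Nat.cast_nonneg n)) one_pos one_pos
  refine h.congr_fun (fun x hx => ?_) measurableSet_Ioi
  beta_reduce
  rw [Real.rpow_natCast, Real.rpow_one, neg_mul, one_mul]

lemma tendsto_one_add_mul_exp : Tendsto (fun x : ℝ => (1 + x) * Real.exp (-x)) atTop (𝓝 0) := by
  have h := (Real.tendsto_pow_mul_exp_neg_atTop_nhds_zero 0).add
    (Real.tendsto_pow_mul_exp_neg_atTop_nhds_zero 1)
  rw [add_zero] at h
  exact h.congr (fun x => by ring)

lemma tendsto_cube_mul_exp : Tendsto (fun x : ℝ => x ^ 3 * (1 + x) * Real.exp (-x)) atTop (𝓝 0) := by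
  have h := (Real.tendsto_pow_mul_exp_neg_atTop_nhds_zero 3).add
    (Real.tendsto_pow_mul_exp_neg_atTop_nhds_zero 4)
  rw [add_zero] at h
  exact h.congr (fun x => by ring)

lemma DD_measurable : Measurable DD := by
  unfold DD; fun_prop

lemma integrableOn_cube_DD : IntegrableOn (fun u : ℝ => u ^ 3 * DD u) (Ioi 0) := by
  apply Integrable.mono' (g := fun u : ℝ =>
    u ^ 3 * Real.exp (-u) + (2 * (u ^ 4 * Real.exp (-u)) + u ^ 5 * Real.exp (-u)))
  · exact (integrableOn_pow_exp 3).add (((integrableOn_pow_exp 4).const_mul 2).add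
      (integrableOn_pow_exp 5))
  · exact ((measurable_id.pow_const 3).mul DD_measurable).aestronglyMeasurable
  · filter_upwards [ae_restrict_mem measurableSet_Ioi] with u hu
    have hu' : (0:ℝ) < u := hu
    have h1 : 0 ≤ DD u := DD_nonneg hu'.le
    have h2 := DD_le hu'
    rw [Real.norm_eq_abs, abs_of_nonneg (by positivity)]
    nlinarith [Real.exp_pos (-u), pow_pos hu' 3]

lemma integrableOn_bose_aux : IntegrableOn (fun u : ℝ => u ^ 3 / (Real.exp u - 1)) (Ioi 0) := by
  apply Integrable.mono' (g := fun u : ℝ =>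
    u ^ 2 * Real.exp (-u) + u ^ 3 * Real.exp (-u))
  · exact (integrableOn_pow_exp 2).add (integrableOn_pow_exp 3)
  · apply Measurable.aestronglyMeasurable; fun_prop
  · filter_upwards [ae_restrict_mem measurableSet_Ioi] with u hu
    have hu' : (0:ℝ) < u := hu
    have hg : u ^ 3 / (Real.exp u - 1) = u ^ 2 * GG u := by rw [GG]; ring
    have h1 : 0 ≤ GG u := GG_nonneg hu'.le
    have h2 := GG_le hu'
    rw [Real.norm_eq_abs, hg, abs_of_nonneg (by positivity)]
    nlinarith [Real.exp_pos (-u), pow_pos hu' 2]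

lemma integrableOn_term (n : ℕ) :
    IntegrableOn (fun u : ℝ => u ^ 3 * Real.exp (-(((n : ℝ) + 1) * u))) (Ioi 0) := by
  apply Integrable.mono' (integrableOn_pow_exp 3)
  · apply Measurable.aestronglyMeasurable; fun_prop
  · filter_upwards [ae_restrict_mem measurableSet_Ioi] with u hu
    have hu' : (0:ℝ) < u := hu
    rw [Real.norm_eq_abs, abs_of_nonneg (by positivity)]
    have : Real.exp (-(((n : ℝ) + 1) * u)) ≤ Real.exp (-u) := by
      apply Real.exp_le_exp.mpr
      have : (1:ℝ) ≤ (n:ℝ) + 1 := by simp [Nat.cast_nonneg]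
      nlinarith
    nlinarith [pow_pos hu' 3]

lemma term_value (n : ℕ) :
    ∫ u in Ioi (0:ℝ), u ^ 3 * Real.exp (-(((n : ℝ) + 1) * u)) = 6 / ((n : ℝ) + 1) ^ 4 := by
  have hr : (0:ℝ) < (n : ℝ) + 1 := by positivity
  have h := integral_rpow_mul_exp_neg_mul_Ioi (a := 4) (r := (n : ℝ) + 1) (by norm_num) hr
  have heq : ∫ t in Ioi (0:ℝ), t ^ ((4:ℝ) - 1) * Real.exp (-(((n : ℝ) + 1) * t))
      = ∫ u in Ioi (0:ℝ), u ^ 3 * Real.exp (-(((n : ℝ) + 1) * u)) := by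
    refine setIntegral_congr_fun measurableSet_Ioi (fun t ht => ?_)
    norm_num
  rw [heq] at h
  rw [h]
  have hg : Real.Gamma 4 = 6 := by
    rw [show (4:ℝ) = ((3:ℕ):ℝ) + 1 by norm_num, Real.Gamma_nat_eq_factorial]
    norm_num [Nat.factorial]
  rw [hg, show ((4:ℝ)) = ((4:ℕ):ℝ) by norm_num, Real.rpow_natCast]
  rw [div_pow, one_pow]
  ring


lemma bose_series {u : ℝ} (hu : 0 < u) :
    u ^ 3 / (Real.exp u - 1) = ∑' n : ℕ, u ^ 3 * Real.exp (-(((n : ℝ) + 1) * u)) := by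
  have hE := expm1_pos hu
  have hr1 : Real.exp (-u) < 1 := Real.exp_lt_one_iff.mpr (by linarith)
  have hr0 : (0:ℝ) ≤ Real.exp (-u) := (Real.exp_pos _).le
  have hterm : ∀ n : ℕ, u ^ 3 * Real.exp (-(((n : ℝ) + 1) * u))
      = u ^ 3 * (Real.exp (-u) * Real.exp (-u) ^ n) := by
    intro n
    rw [← Real.exp_nat_mul, ← Real.exp_add]
    ring_nf
  have h2 : Real.exp (-u) * Real.exp u = 1 := by rw [← Real.exp_add]; simp
  have h3 : (1 - Real.exp (-u)) ≠ 0 := by linarith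
  rw [tsum_congr hterm, tsum_mul_left, tsum_mul_left, tsum_geometric_of_lt_one hr0 hr1]
  field_simp
  linear_combination -h2

lemma bose_value : ∫ u in Ioi (0:ℝ), u ^ 3 / (Real.exp u - 1) = π ^ 4 / 15 := by
  have hsum : HasSum (fun n : ℕ => (6:ℝ) / ((n:ℝ) + 1) ^ 4) (π ^ 4 / 15) := by
    have h0 : HasSum (fun n : ℕ => (1:ℝ) / ((n + 1 : ℕ):ℝ) ^ 4) (π ^ 4 / 90) := by
      refine (hasSum_nat_add_iff (f := fun n : ℕ => (1:ℝ) / (n:ℝ) ^ 4) 1).mpr ?_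
      simpa using hasSum_zeta_four
    have h1 : HasSum (fun n : ℕ => (1:ℝ) / ((n:ℝ) + 1) ^ 4) (π ^ 4 / 90) := by
      convert h0 using 2 with n
      push_cast
      ring
    have h2 := h1.mul_left 6
    rw [show (6:ℝ) * (π ^ 4 / 90) = π ^ 4 / 15 by ring] at h2
    exact h2.congr_fun (fun n => by ring)
  have hmeas : ∀ n : ℕ, AEStronglyMeasurable
      (fun u : ℝ => u ^ 3 * Real.exp (-(((n : ℝ) + 1) * u))) (volume.restrict (Ioi 0)) :=
    fun n => by apply Measurable.aestronglyMeasurable; fun_prop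
  have hnn : ∀ n : ℕ, (0:ℝ) ≤ 6 / ((n:ℝ) + 1) ^ 4 := fun n => by positivity
  have heach : ∀ n : ℕ, ∫⁻ u in Ioi (0:ℝ), ‖u ^ 3 * Real.exp (-(((n : ℝ) + 1) * u))‖₊ ∂volume
      = ENNReal.ofReal (6 / ((n:ℝ) + 1) ^ 4) := by
    intro n
    have hcg : ∫⁻ u in Ioi (0:ℝ), ‖u ^ 3 * Real.exp (-(((n : ℝ) + 1) * u))‖₊ ∂volume
        = ∫⁻ u in Ioi (0:ℝ), ENNReal.ofReal (u ^ 3 * Real.exp (-(((n : ℝ) + 1) * u))) ∂volume := by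
      apply lintegral_congr_ae
      filter_upwards [ae_restrict_mem measurableSet_Ioi] with u hu
      have hu' : (0:ℝ) < u := hu
      exact Real.enorm_eq_ofReal (by positivity)
    rw [hcg, ← ofReal_integral_eq_lintegral_ofReal (integrableOn_term n) ?_, term_value n]
    filter_upwards [ae_restrict_mem measurableSet_Ioi] with u hu
    have hu' : (0:ℝ) < u := hu
    positivity
  have hlint : ∑' n : ℕ, ∫⁻ u in Ioi (0:ℝ), ‖u ^ 3 * Real.exp (-(((n : ℝ) + 1) * u))‖₊ ∂volume
      ≠ ⊤ := by
    simp_rw [heach]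
    rw [← ENNReal.ofReal_tsum_of_nonneg hnn hsum.summable]
    exact ENNReal.ofReal_ne_top
  have hseq : ∫ u in Ioi (0:ℝ), u ^ 3 / (Real.exp u - 1)
      = ∫ u in Ioi (0:ℝ), ∑' n : ℕ, u ^ 3 * Real.exp (-(((n : ℝ) + 1) * u)) :=
    setIntegral_congr_fun measurableSet_Ioi (fun u hu => bose_series hu)
  rw [hseq, integral_tsum hmeas hlint, tsum_congr (fun n => term_value n)]
  exact hsum.tsum_eq

lemma phi_bound {u : ℝ} (hu : 0 ≤ u) : u ^ 3 * GG u ≤ u ^ 3 * (1 + u) * Real.exp (-u) := by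
  rcases hu.eq_or_lt with rfl | hu
  · simp [GG]
  · have := GG_le hu
    nlinarith [pow_pos hu 3]

lemma tendsto_phi_zero :
    Tendsto (fun u : ℝ => u ^ 3 * GG u) (𝓝[Ici 0] 0) (𝓝 0) := by
  apply squeeze_zero' (t₀ := 𝓝[Ici 0] (0:ℝ)) (g := fun u : ℝ => u ^ 3 * (1 + u) * Real.exp (-u))
  · filter_upwards [self_mem_nhdsWithin] with u hu
    exact mul_nonneg (pow_nonneg hu 3) (GG_nonneg hu)
  · filter_upwards [self_mem_nhdsWithin] with u hu
    exact phi_bound hu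
  · have hc : Continuous (fun u : ℝ => u ^ 3 * (1 + u) * Real.exp (-u)) := by fun_prop
    have := hc.tendsto' 0 0 (by norm_num)
    exact this.mono_left nhdsWithin_le_nhds

lemma tendsto_phi_top :
    Tendsto (fun u : ℝ => u ^ 3 * GG u) atTop (𝓝 0) := by
  apply squeeze_zero' (t₀ := atTop) (g := fun u : ℝ => u ^ 3 * (1 + u) * Real.exp (-u))
  · filter_upwards [eventually_ge_atTop (0:ℝ)] with u hu
    exact mul_nonneg (pow_nonneg hu 3) (GG_nonneg hu)
  · filter_upwards [eventually_ge_atTop (0:ℝ)] with u hu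
    exact phi_bound hu
  · exact tendsto_cube_mul_exp

lemma int_cube_GG : IntegrableOn (fun u : ℝ => 3 * u ^ 2 * GG u) (Ioi 0) :=
  MeasureTheory.IntegrableOn.congr_fun (integrableOn_bose_aux.const_mul 3)
    (fun u _ => by rw [GG]; ring) measurableSet_Ioi

lemma J_value : ∫ u in Ioi (0:ℝ), u ^ 3 * DD u = π ^ 4 / 5 := by
  have hderiv : ∀ u ∈ Ioi (0:ℝ), HasDerivAt (fun u : ℝ => u ^ 3 * GG u)
      (3 * u ^ 2 * GG u - u ^ 3 * DD u) u := by
    intro u hu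
    have h := (hasDerivAt_pow 3 u).mul (hasDerivAt_GG hu)
    refine h.congr_deriv (Eq.symm ?_)
    push_cast
    ring
  have hint : IntegrableOn (fun u : ℝ => 3 * u ^ 2 * GG u - u ^ 3 * DD u) (Ioi 0) :=
    int_cube_GG.sub integrableOn_cube_DD
  have hcw : ContinuousWithinAt (fun u : ℝ => u ^ 3 * GG u) (Ici 0) 0 := by
    unfold ContinuousWithinAt
    simpa using tendsto_phi_zero
  have h0 := integral_Ioi_of_hasDerivAt_of_tendsto
    (f := fun u : ℝ => u ^ 3 * GG u) (a := 0)
    hcw hderiv hint tendsto_phi_top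
  rw [integral_sub int_cube_GG integrableOn_cube_DD] at h0
  have h1 : ∫ u in Ioi (0:ℝ), 3 * u ^ 2 * GG u = π ^ 4 / 5 := by
    have : ∫ u in Ioi (0:ℝ), 3 * u ^ 2 * GG u
        = ∫ u in Ioi (0:ℝ), 3 * (u ^ 3 / (Real.exp u - 1)) :=
      setIntegral_congr_fun measurableSet_Ioi (fun u _ => by rw [GG]; ring)
    rw [this, MeasureTheory.integral_const_mul, bose_value]
    ring
  have h3 : (0:ℝ) ^ 3 * GG 0 = 0 := by simp
  rw [h1, h3] at h0
  linarith

noncomputable def PSI (hh cc : ℝ) (t : ℝ) : ℝ := hh / (2 * Real.sqrt t) * DD (cc * Real.sqrt t)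

lemma PSI_nonneg {hh cc : ℝ} (hhp : 0 ≤ hh) (hcp : 0 ≤ cc) (t : ℝ) : 0 ≤ PSI hh cc t := by
  unfold PSI
  have h1 : 0 ≤ Real.sqrt t := Real.sqrt_nonneg t
  exact mul_nonneg (div_nonneg hhp (by positivity)) (DD_nonneg (by positivity))

lemma PSI_measurable (hh cc : ℝ) : Measurable (PSI hh cc) := by
  unfold PSI
  exact ((measurable_const.div ((Real.continuous_sqrt.measurable).const_mul 2))).mul
    (DD_measurable.comp ((Real.continuous_sqrt.measurable).const_mul cc))

lemma key_identity (φ : StieltjesFunction ℝ) (hnonneg : ∀ x, 0 ≤ φ x)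
    (hzero : ∀ x ≤ (0 : ℝ), φ x = 0)
    (h K T : ℝ) (hh : 0 < h) (hK : 0 < K) (hT : 0 < T) :
    (∫ l in Ioi (0:ℝ),
        h * Real.sqrt l / (Real.exp (h * Real.sqrt l / (K * T)) - 1) ∂φ.measure)
      = K * T * ∫ u in Ioi (0:ℝ), φ ((K * T * u / h) ^ 2) * DD u := by
  set c := h / (K * T) with hcdef
  have hc : 0 < c := by positivity
  set ψ := PSI h c with hψdef
  set g := fun t : ℝ => K * T * GG (c * Real.sqrt t) with hgdef
  -- derivative of g
  have hgderiv : ∀ t : ℝ, 0 < t → HasDerivAt g (-ψ t) t := by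
    intro t ht
    have hst : 0 < Real.sqrt t := Real.sqrt_pos.mpr ht
    have hs : HasDerivAt (fun t : ℝ => c * Real.sqrt t) (c * (1 / (2 * Real.sqrt t))) t :=
      (Real.hasDerivAt_sqrt ht.ne').const_mul c
    have hGd := (hasDerivAt_GG (x := c * Real.sqrt t) (by positivity)).comp t hs
    have h2 := hGd.const_mul (K * T)
    refine h2.congr_deriv (Eq.symm ?_)
    show -(h / (2 * Real.sqrt t) * DD (c * Real.sqrt t)) = _
    have hKT : K * T * c = h := by rw [hcdef]; field_simp
    rw [show K * T * (-DD (c * Real.sqrt t) * (c * (1 / (2 * Real.sqrt t))))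
        = -((K * T * c) * (DD (c * Real.sqrt t) * (1 / (2 * Real.sqrt t)))) from by ring, hKT]
    ring
  -- g tends to 0 at infinity
  have hsqrt_top : Tendsto (fun t : ℝ => c * Real.sqrt t) atTop atTop := by
    apply Tendsto.const_mul_atTop hc
    have h2 := tendsto_rpow_atTop (show (0:ℝ) < 1/2 by norm_num)
    apply h2.congr'
    filter_upwards [eventually_ge_atTop (0:ℝ)] with x hx
    exact (Real.sqrt_eq_rpow x).symm
  have hGtop : Tendsto g atTop (𝓝 0) := by
    have h1 : Tendsto (fun t : ℝ => GG (c * Real.sqrt t)) atTop (𝓝 0) := by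
      apply squeeze_zero' (t₀ := atTop)
        (g := fun t : ℝ => (1 + c * Real.sqrt t) * Real.exp (-(c * Real.sqrt t)))
      · filter_upwards [eventually_ge_atTop (0:ℝ)] with t ht
        exact GG_nonneg (by positivity)
      · filter_upwards [eventually_gt_atTop (0:ℝ)] with t ht
        exact GG_le (by positivity)
      · exact tendsto_one_add_mul_exp.comp hsqrt_top
    have h2 := h1.const_mul (K * T)
    simpa using h2
  -- FTC on [a, ∞) for a > 0
  have hψnn : ∀ t : ℝ, 0 ≤ ψ t := PSI_nonneg hh.le hc.le
  have hFTC : ∀ a : ℝ, 0 < a →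
      (∫ t in Ioi a, ψ t) = g a ∧ IntegrableOn ψ (Ioi a) := by
    intro a ha
    have hcont : ContinuousWithinAt g (Ici a) a :=
      (hgderiv a ha).continuousAt.continuousWithinAt
    have hderiv' : ∀ t ∈ Ioi a, HasDerivAt g (-ψ t) t := fun t ht => hgderiv t (ha.trans ht)
    have hneg : ∀ t ∈ Ioi a, -ψ t ≤ 0 := fun t _ => neg_nonpos.mpr (hψnn t)
    have hint := integrableOn_Ioi_deriv_of_nonpos hcont hderiv' hneg hGtop
    have hval := integral_Ioi_of_hasDerivAt_of_nonpos hcont hderiv' hneg hGtop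
    rw [integral_neg] at hval
    constructor
    · linarith
    · exact integrable_neg_iff.mp hint
  have hKT : K * T * c = h := by rw [hcdef]; field_simp
  have hGGmeas : Measurable GG := by unfold GG; fun_prop
  have hgmeas : Measurable g := by
    exact (hGGmeas.comp ((Real.continuous_sqrt.measurable).const_mul c)).const_mul (K * T)
  have hstep1 : (∫ l in Ioi (0:ℝ),
      h * Real.sqrt l / (Real.exp (h * Real.sqrt l / (K * T)) - 1) ∂φ.measure)
      = ∫ l in Ioi (0:ℝ), g l ∂φ.measure := by
    refine setIntegral_congr_fun measurableSet_Ioi (fun l hl => ?_)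
    have hl' : (0:ℝ) < l := hl
    have hsl : 0 < Real.sqrt l := Real.sqrt_pos.mpr hl'
    have hX : h * Real.sqrt l / (K * T) = c * Real.sqrt l := by rw [hcdef]; ring
    rw [hX]
    show h * Real.sqrt l / (Real.exp (c * Real.sqrt l) - 1) = K * T * GG (c * Real.sqrt l)
    unfold GG
    rw [show K * T * (c * Real.sqrt l / (Real.exp (c * Real.sqrt l) - 1))
        = (K * T * c) * Real.sqrt l / (Real.exp (c * Real.sqrt l) - 1) from by ring, hKT]
  have hgnn : ∀ l : ℝ, 0 ≤ g l := by
    intro l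
    have : 0 ≤ c * Real.sqrt l := by positivity
    exact mul_nonneg (by positivity) (GG_nonneg this)
  have hLHS : ∫ l in Ioi (0:ℝ), g l ∂φ.measure
      = (∫⁻ l in Ioi (0:ℝ), ENNReal.ofReal (g l) ∂φ.measure).toReal :=
    integral_eq_lintegral_of_nonneg_ae (ae_of_all _ hgnn) hgmeas.aestronglyMeasurable
  have hkmeas : Measurable (Function.uncurry
      fun l t : ℝ => (Ioi l).indicator (fun s => ENNReal.ofReal (ψ s)) t) := by
    have heq : (Function.uncurry fun l t : ℝ => (Ioi l).indicator
        (fun s => ENNReal.ofReal (ψ s)) t)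
        = {p : ℝ × ℝ | p.1 < p.2}.indicator (fun p => ENNReal.ofReal (ψ p.2)) := by
      funext p
      rcases p with ⟨l, t⟩
      by_cases hlt : l < t <;>
        simp [Function.uncurry, Set.indicator, Set.mem_Ioi, hlt, Set.mem_setOf_eq]
    rw [heq]
    exact Measurable.indicator (((PSI_measurable h c).comp measurable_snd).ennreal_ofReal)
      (measurableSet_lt measurable_fst measurable_snd)
  have hL1 : (∫⁻ l in Ioi (0:ℝ), ENNReal.ofReal (g l) ∂φ.measure)
      = ∫⁻ l in Ioi (0:ℝ), (∫⁻ t in Ioi (0:ℝ),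
          (Ioi l).indicator (fun s => ENNReal.ofReal (ψ s)) t ∂volume) ∂φ.measure := by
    refine setLIntegral_congr_fun measurableSet_Ioi (fun l hl => ?_)
    have hl' : (0:ℝ) < l := hl
    have hIoi : Ioi l ∩ Ioi (0:ℝ) = Ioi l := inter_eq_left.mpr (Ioi_subset_Ioi hl'.le)
    have e1 : (∫⁻ t in Ioi (0:ℝ), (Ioi l).indicator (fun s => ENNReal.ofReal (ψ s)) t ∂volume)
        = ∫⁻ t in Ioi l, ENNReal.ofReal (ψ t) ∂volume := by
      rw [lintegral_indicator measurableSet_Ioi _,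
        Measure.restrict_restrict measurableSet_Ioi, hIoi]
    rw [e1, ← ofReal_integral_eq_lintegral_ofReal (hFTC l hl').2 (ae_of_all _ hψnn),
      (hFTC l hl').1]
  have hL2 : (∫⁻ l in Ioi (0:ℝ), (∫⁻ t in Ioi (0:ℝ),
        (Ioi l).indicator (fun s => ENNReal.ofReal (ψ s)) t ∂volume) ∂φ.measure)
      = ∫⁻ t in Ioi (0:ℝ), (∫⁻ l in Ioi (0:ℝ),
          (Ioi l).indicator (fun s => ENNReal.ofReal (ψ s)) t ∂φ.measure) ∂volume :=
    lintegral_lintegral_swap hkmeas.aemeasurable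
  have hL3 : (∫⁻ t in Ioi (0:ℝ), (∫⁻ l in Ioi (0:ℝ),
        (Ioi l).indicator (fun s => ENNReal.ofReal (ψ s)) t ∂φ.measure) ∂volume)
      = ∫⁻ t in Ioi (0:ℝ),
          ENNReal.ofReal (ψ t) * ENNReal.ofReal (Function.leftLim φ t) ∂volume := by
    refine setLIntegral_congr_fun measurableSet_Ioi (fun t ht => ?_)
    have ht' : (0:ℝ) < t := ht
    have e1 : (fun l : ℝ => (Ioi l).indicator (fun s => ENNReal.ofReal (ψ s)) t)
        = fun l : ℝ => (Iio t).indicator (fun _ => ENNReal.ofReal (ψ t)) l := by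
      funext l
      by_cases hlt : l < t <;>
        simp [Set.indicator, Set.mem_Ioi, Set.mem_Iio, hlt]
    rw [e1, lintegral_indicator measurableSet_Iio _]
    rw [setLIntegral_const]
    rw [Measure.restrict_apply measurableSet_Iio, Iio_inter_Ioi, φ.measure_Ioo]
    rw [hzero 0 le_rfl, sub_zero]
  have hL4 : (∫⁻ t in Ioi (0:ℝ),
        ENNReal.ofReal (ψ t) * ENNReal.ofReal (Function.leftLim φ t) ∂volume)
      = ∫⁻ t in Ioi (0:ℝ), ENNReal.ofReal (ψ t * φ t) ∂volume := by
    have hcount : ({x : ℝ | ¬ContinuousAt φ x}).Countable := φ.mono.countable_not_continuousAt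
    have h1 : ∀ᵐ t : ℝ, ContinuousAt φ t := by
      rw [ae_iff]
      exact hcount.measure_zero _
    apply lintegral_congr_ae
    filter_upwards [ae_restrict_of_ae h1] with t hct
    have hnb : (𝓝[<] t).NeBot := inferInstance
    have hll : Function.leftLim φ t = φ t :=
      leftLim_eq_of_tendsto (hct.tendsto.mono_left nhdsWithin_le_nhds)
    rw [hll, ← ENNReal.ofReal_mul (hψnn t)]
  have hRHS : ∫ t in Ioi (0:ℝ), ψ t * φ t
      = (∫⁻ t in Ioi (0:ℝ), ENNReal.ofReal (ψ t * φ t) ∂volume).toReal :=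
    integral_eq_lintegral_of_nonneg_ae
      (ae_of_all _ fun t => mul_nonneg (hψnn t) (hnonneg t))
      ((PSI_measurable h c).mul φ.mono.measurable).aestronglyMeasurable
  -- change of variables
  have hm : ∀ u ∈ Ioi (0:ℝ),
      HasDerivWithinAt (fun u : ℝ => (u / c) ^ 2) (2 * u / c ^ 2) (Ioi 0) u := by
    intro u hu
    have h1 : HasDerivAt (fun u : ℝ => (u / c) ^ 2) (2 * (u / c) ^ 1 * (1 / c)) u :=
      ((hasDerivAt_id u).div_const c).pow 2
    have h2 : 2 * (u / c) ^ 1 * (1 / c) = 2 * u / c ^ 2 := by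
      rw [pow_one]
      ring
    rw [h2] at h1
    exact h1.hasDerivWithinAt
  have himg : (fun u : ℝ => (u / c) ^ 2) '' (Ioi 0) = Ioi 0 := by
    ext t
    constructor
    · rintro ⟨u, hu, rfl⟩
      have hu' : (0:ℝ) < u := hu
      show (0:ℝ) < (u / c) ^ 2
      positivity
    · intro ht
      have ht' : (0:ℝ) < t := ht
      refine ⟨c * Real.sqrt t, ?_, ?_⟩
      · have hst : 0 < Real.sqrt t := Real.sqrt_pos.mpr ht'
        exact mul_pos hc hst
      · show (c * Real.sqrt t / c) ^ 2 = t
        rw [mul_div_cancel_left₀ _ hc.ne']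
        exact Real.sq_sqrt ht'.le
  have hinj : InjOn (fun u : ℝ => (u / c) ^ 2) (Ioi 0) := by
    intro a ha b hb hab
    simp only at hab
    have ha' : (0:ℝ) < a := ha
    have hb' : (0:ℝ) < b := hb
    have hx := div_pos ha' hc
    have hy := div_pos hb' hc
    rcases sq_eq_sq_iff_eq_or_eq_neg.mp hab with h4 | h4
    · field_simp at h4
      exact h4
    · exfalso
      rw [h4] at hx
      linarith
  have hsub := integral_image_eq_integral_abs_deriv_smul measurableSet_Ioi hm hinj
    (fun t => ψ t * φ t)
  rw [himg] at hsub
  have hsub2 : (∫ u in Ioi (0:ℝ), |2 * u / c ^ 2| • (ψ ((u / c) ^ 2) * φ ((u / c) ^ 2)))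
      = ∫ u in Ioi (0:ℝ), K * T * (φ ((K * T * u / h) ^ 2) * DD u) := by
    refine setIntegral_congr_fun measurableSet_Ioi (fun u hu => ?_)
    have hu' : (0:ℝ) < u := hu
    have h1 : Real.sqrt ((u / c) ^ 2) = u / c := Real.sqrt_sq (by positivity)
    have h2 : (u / c) ^ 2 = (K * T * u / h) ^ 2 := by
      rw [hcdef]
      field_simp
    have h3 : c * (u / c) = u := by field_simp
    show |2 * u / c ^ 2| • (PSI h c ((u / c) ^ 2) * φ ((u / c) ^ 2)) = _
    unfold PSI
    rw [h1, h3, smul_eq_mul, abs_of_nonneg (by positivity), ← h2, ← hKT]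
    field_simp
  calc (∫ l in Ioi (0:ℝ),
        h * Real.sqrt l / (Real.exp (h * Real.sqrt l / (K * T)) - 1) ∂φ.measure)
      = ∫ l in Ioi (0:ℝ), g l ∂φ.measure := hstep1
    _ = (∫⁻ l in Ioi (0:ℝ), ENNReal.ofReal (g l) ∂φ.measure).toReal := hLHS
    _ = (∫⁻ t in Ioi (0:ℝ), ENNReal.ofReal (ψ t * φ t) ∂volume).toReal := by
        rw [hL1, hL2, hL3, hL4]
    _ = ∫ t in Ioi (0:ℝ), ψ t * φ t := hRHS.symm
    _ = ∫ u in Ioi (0:ℝ), K * T * (φ ((K * T * u / h) ^ 2) * DD u) := by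
        rw [hsub]; exact hsub2
    _ = K * T * ∫ u in Ioi (0:ℝ), φ ((K * T * u / h) ^ 2) * DD u := integral_const_mul _ _

lemma sq_rpow_32 {a : ℝ} (ha : 0 ≤ a) : (a ^ 2) ^ ((3:ℝ)/2) = a ^ 3 := by
  rw [← Real.rpow_natCast a 2, ← Real.rpow_mul ha,
    show ((2:ℕ):ℝ) * ((3:ℝ)/2) = ((3:ℕ):ℝ) by norm_num, Real.rpow_natCast]

theorem stmt9 (φ : StieltjesFunction ℝ) (hnonneg : ∀ x, 0 ≤ φ x)
    (hzero : ∀ x ≤ (0 : ℝ), φ x = 0)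
    (hbdd : ∃ M : ℝ, ∀ x, φ x ≤ M)
    (c₀ : ℝ) (hc₀ : 0 < c₀)
    (hasymp : Tendsto (fun l : ℝ => φ l / l ^ ((3 : ℝ) / 2)) (nhdsWithin 0 (Set.Ioi 0))
      (nhds c₀))
    (h K : ℝ) (hh : 0 < h) (hK : 0 < K) :
    Tendsto (fun T : ℝ =>
        (∫ l in Set.Ioi (0 : ℝ),
          h * Real.sqrt l / (Real.exp (h * Real.sqrt l / (K * T)) - 1) ∂φ.measure) / T ^ 4)
      (nhdsWithin 0 (Set.Ioi 0))
      (nhds (π ^ 4 / 5 * c₀ * K ^ 4 / h ^ 3)) := by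
  obtain ⟨M, hM⟩ := hbdd
  have hM0 : 0 ≤ M := le_trans (hnonneg 1) (hM 1)
  have hev : ∀ᶠ x in nhdsWithin 0 (Set.Ioi 0), φ x / x ^ ((3:ℝ)/2) ≤ c₀ + 1 :=
    hasymp.eventually (eventually_le_nhds (by linarith))
  obtain ⟨δ, hδpos, hδ⟩ : ∃ δ > 0, ∀ x : ℝ, 0 < x → x < δ → φ x / x ^ ((3:ℝ)/2) ≤ c₀ + 1 := by
    rw [eventually_nhdsWithin_iff, Metric.eventually_nhds_iff] at hev
    obtain ⟨ε, hε, hball⟩ := hev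
    exact ⟨ε, hε, fun x hx hxε =>
      hball (by rwa [Real.dist_eq, sub_zero, abs_of_pos hx]) hx⟩
  set C := (c₀ + 1) + M / δ ^ ((3:ℝ)/2) with hCdef
  have hδ32 : 0 < δ ^ ((3:ℝ)/2) := Real.rpow_pos_of_pos hδpos _
  have hCpos : 0 < C := by rw [hCdef]; positivity
  have hC : ∀ x : ℝ, 0 < x → φ x ≤ C * x ^ ((3:ℝ)/2) := by
    intro x hx
    have hx32 : 0 < x ^ ((3:ℝ)/2) := Real.rpow_pos_of_pos hx _
    rcases lt_or_ge x δ with hlt | hge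
    · have h1 := hδ x hx hlt
      rw [div_le_iff₀ hx32] at h1
      have h2 : 0 ≤ M / δ ^ ((3:ℝ)/2) * x ^ ((3:ℝ)/2) := by positivity
      rw [hCdef]; nlinarith
    · have h1 : φ x ≤ M := hM x
      have h2 : δ ^ ((3:ℝ)/2) ≤ x ^ ((3:ℝ)/2) :=
        Real.rpow_le_rpow hδpos.le hge (by norm_num)
      have h3 : M ≤ M / δ ^ ((3:ℝ)/2) * x ^ ((3:ℝ)/2) := by
        rw [div_mul_eq_mul_div, le_div_iff₀ hδ32]
        nlinarith
      have h4 : 0 ≤ (c₀ + 1) * x ^ ((3:ℝ)/2) := by positivity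
      rw [hCdef]; nlinarith
  have hKey : ∀ᶠ T in nhdsWithin 0 (Set.Ioi 0),
      (∫ l in Set.Ioi (0:ℝ),
          h * Real.sqrt l / (Real.exp (h * Real.sqrt l / (K * T)) - 1) ∂φ.measure) / T ^ 4
        = ∫ u in Set.Ioi (0:ℝ), K / T ^ 3 * (φ ((K * T * u / h) ^ 2) * DD u) := by
    filter_upwards [self_mem_nhdsWithin] with T hT
    have hT' : (0:ℝ) < T := hT
    rw [key_identity φ hnonneg hzero h K T hh hK hT', MeasureTheory.integral_const_mul]
    field_simp
  rw [tendsto_congr' hKey]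
  have hlim := tendsto_integral_filter_of_dominated_convergence
    (μ := volume.restrict (Set.Ioi 0)) (l := nhdsWithin 0 (Set.Ioi 0))
    (F := fun T u => K / T ^ 3 * (φ ((K * T * u / h) ^ 2) * DD u))
    (f := fun u => K * (c₀ * (K * u / h) ^ 3) * DD u)
    (bound := fun u => K * C * (K * u / h) ^ 3 * DD u)
    ?_ ?_ ?_ ?_
  · have hval : (∫ u in Set.Ioi (0:ℝ), K * (c₀ * (K * u / h) ^ 3) * DD u)
        = π ^ 4 / 5 * c₀ * K ^ 4 / h ^ 3 := by
      have e : ∀ u : ℝ, K * (c₀ * (K * u / h) ^ 3) * DD u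
          = (K * c₀ * K ^ 3 / h ^ 3) * (u ^ 3 * DD u) := fun u => by
        field_simp
      rw [setIntegral_congr_fun measurableSet_Ioi (fun u _ => e u),
        MeasureTheory.integral_const_mul, J_value]
      field_simp
    rw [← hval]
    exact hlim
  · apply Filter.Eventually.of_forall
    intro T
    exact ((((φ.mono.measurable).comp (by fun_prop : Measurable
      (fun u : ℝ => (K * T * u / h) ^ 2))).mul DD_measurable).const_mul
      (K / T ^ 3)).aestronglyMeasurable
  · filter_upwards [self_mem_nhdsWithin] with T hT
    have hT' : (0:ℝ) < T := hT
    rw [ae_restrict_iff' measurableSet_Ioi]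
    apply Filter.Eventually.of_forall
    intro u hu
    have hu' : (0:ℝ) < u := hu
    have ha : 0 ≤ K * T * u / h := by positivity
    have hφb := hC ((K * T * u / h) ^ 2) (by positivity)
    rw [sq_rpow_32 ha] at hφb
    have hDnn : 0 ≤ DD u := DD_nonneg hu'.le
    rw [Real.norm_eq_abs, abs_of_nonneg (mul_nonneg (by positivity)
      (mul_nonneg (hnonneg _) hDnn))]
    have step1 : K / T ^ 3 * (φ ((K * T * u / h) ^ 2) * DD u)
        ≤ K / T ^ 3 * ((C * (K * T * u / h) ^ 3) * DD u) :=
      mul_le_mul_of_nonneg_left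
        (mul_le_mul_of_nonneg_right hφb hDnn) (by positivity)
    have step2 : K / T ^ 3 * ((C * (K * T * u / h) ^ 3) * DD u)
        = K * C * (K * u / h) ^ 3 * DD u := by
      field_simp
    linarith
  · apply MeasureTheory.IntegrableOn.congr_fun (integrableOn_cube_DD.const_mul
      (K * C * K ^ 3 / h ^ 3))
    · intro u _
      field_simp
    · exact measurableSet_Ioi
  · rw [ae_restrict_iff' measurableSet_Ioi]
    apply Filter.Eventually.of_forall
    intro u hu
    have hu' : (0:ℝ) < u := hu
    have hq : Tendsto (fun T : ℝ => (K * T * u / h) ^ 2) (nhdsWithin 0 (Set.Ioi 0))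
        (nhdsWithin 0 (Set.Ioi 0)) := by
      apply tendsto_nhdsWithin_of_tendsto_nhds_of_eventually_within
      · have hcont : Continuous (fun T : ℝ => (K * T * u / h) ^ 2) := by fun_prop
        have h0 := hcont.tendsto' 0 0 (by norm_num)
        exact h0.mono_left nhdsWithin_le_nhds
      · filter_upwards [self_mem_nhdsWithin] with T hT
        have hT' : (0:ℝ) < T := hT
        show (0:ℝ) < (K * T * u / h) ^ 2
        positivity
    have h1 := hasymp.comp hq
    have h2 := h1.mul_const (K * (K * u / h) ^ 3 * DD u)
    show Tendsto (fun T : ℝ => K / T ^ 3 * (φ ((K * T * u / h) ^ 2) * DD u))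
      (nhdsWithin 0 (Set.Ioi 0)) (𝓝 (K * (c₀ * (K * u / h) ^ 3) * DD u))
    rw [show K * (c₀ * (K * u / h) ^ 3) * DD u
        = c₀ * (K * (K * u / h) ^ 3 * DD u) from by ring]
    apply Tendsto.congr' _ h2
    filter_upwards [self_mem_nhdsWithin] with T hT
    have hT' : (0:ℝ) < T := hT
    have hx32 : ((K * T * u / h) ^ 2) ^ ((3:ℝ)/2) = (K * T * u / h) ^ 3 :=
      sq_rpow_32 (by positivity)
    show φ ((K * T * u / h) ^ 2) / ((K * T * u / h) ^ 2) ^ ((3:ℝ)/2)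
        * (K * (K * u / h) ^ 3 * DD u) = K / T ^ 3 * (φ ((K * T * u / h) ^ 2) * DD u)
    rw [hx32]
    field_simp
end

section
/- Let φ : [0,∞) → [0,∞) be nondecreasing, right-continuous, bounded, with φ(0)=0 and φ(λ) ~ c₀λ^{3/2} as λ → 0⁺ (c₀ > 0). Define C(T) = ∫₀^∞ (ℏ²λ/(KT²))·e^{ℏ√λ/(KT)}/(e^{ℏ√λ/(KT)} − 1)² dφ(λ). Then lim_{T→0⁺} C(T)/T³ = (4π⁴/5)·c₀·ℏ^{−3}·K⁴. -/
open Real MeasureTheory Filter Set Topology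

noncomputable def Hf (x : ℝ) : ℝ := x ^ 2 * Real.exp x / (Real.exp x - 1) ^ 2

noncomputable def Hd (x : ℝ) : ℝ :=
  Real.exp x * (2 * x * (Real.exp x - 1) - x ^ 2 * (Real.exp x + 1)) / (Real.exp x - 1) ^ 3

lemma expm1_ge {x : ℝ} : x ≤ Real.exp x - 1 := by nlinarith [Real.add_one_le_exp x]

lemma hasDerivAt_Hf {x : ℝ} (hx : 0 < x) : HasDerivAt Hf (Hd x) x := by
  have hne : Real.exp x - 1 ≠ 0 := (expm1_pos hx).ne'
  have h1 : HasDerivAt (fun x : ℝ => x ^ 2 * Real.exp x)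
      (2 * x * Real.exp x + x ^ 2 * Real.exp x) x := by
    simpa [mul_comm] using ((hasDerivAt_pow 2 x).fun_mul (Real.hasDerivAt_exp x))
  have h2 : HasDerivAt (fun x : ℝ => (Real.exp x - 1) ^ 2)
      (2 * (Real.exp x - 1) * Real.exp x) x := by
    have := ((Real.hasDerivAt_exp x).sub_const 1).fun_pow 2
    simpa using this
  have := h1.fun_div h2 (pow_ne_zero 2 hne)
  refine this.congr_deriv ?_
  unfold Hd
  field_simp
  ring

-- key inequality: 2(e^x - 1) ≤ x(e^x + 1) for x ≥ 0
lemma key_ineq {x : ℝ} (hx : 0 ≤ x) : 2 * (Real.exp x - 1) ≤ x * (Real.exp x + 1) := by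
  set g : ℝ → ℝ := fun x => x * (Real.exp x + 1) - 2 * (Real.exp x - 1) with hg
  have hderiv : ∀ y : ℝ, HasDerivAt g (1 + (y - 1) * Real.exp y) y := by
    intro y
    have h1 : HasDerivAt (fun y : ℝ => y * (Real.exp y + 1))
        (1 * (Real.exp y + 1) + y * Real.exp y) y :=
      (hasDerivAt_id y).mul ((Real.hasDerivAt_exp y).add_const 1)
    have h2 : HasDerivAt (fun y : ℝ => 2 * (Real.exp y - 1)) (2 * Real.exp y) y := by
      simpa using ((Real.hasDerivAt_exp y).sub_const 1).const_mul 2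
    exact (h1.fun_sub h2).congr_deriv (by ring)
  have hmono : MonotoneOn g (Ici (0:ℝ)) := by
    apply monotoneOn_of_deriv_nonneg (convex_Ici 0)
    · exact (Continuous.continuousOn (by continuity))
    · intro y hy
      exact (hderiv y).differentiableAt.differentiableWithinAt
    · intro y hy
      rw [(hderiv y).deriv]
      rw [interior_Ici] at hy
      rcases le_or_gt y 1 with h1 | h1
      · have : (1 - y) * Real.exp y ≤ 1 := by
          have := Real.add_one_le_exp (-y)
          have h2 : (1 - y) ≤ Real.exp (-y) := by linarith
          calc (1 - y) * Real.exp y ≤ Real.exp (-y) * Real.exp y := by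
                apply mul_le_mul_of_nonneg_right h2 (Real.exp_pos y).le
            _ = 1 := by rw [← Real.exp_add]; simp
        nlinarith
      · nlinarith [Real.exp_pos y]
  have h0 : g 0 = 0 := by simp [hg]
  have := hmono (self_mem_Ici) hx hx
  rw [h0] at this
  simp only [hg] at this
  linarith

lemma Hd_nonpos {x : ℝ} (hx : 0 < x) : Hd x ≤ 0 := by
  have he := expm1_pos hx
  unfold Hd
  apply div_nonpos_of_nonpos_of_nonneg
  · have h1 := key_ineq hx.le
    have : 2 * x * (Real.exp x - 1) - x ^ 2 * (Real.exp x + 1) ≤ 0 := by nlinarith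
    exact mul_nonpos_of_nonneg_of_nonpos (Real.exp_pos x).le this
  · positivity

lemma neg_Hd_le_Hf {x : ℝ} (hx : 0 < x) : -Hd x ≤ Hf x := by
  have he := expm1_pos hx
  have hx2 : x ≤ Real.exp x - 1 := expm1_ge
  unfold Hd Hf
  rw [← neg_div, div_le_div_iff₀ (by positivity) (by positivity)]
  have key : 0 ≤ Real.exp x * (Real.exp x - 1)^2 * x * ((Real.exp x - 1) - x) :=
    mul_nonneg (mul_nonneg (mul_nonneg (Real.exp_pos x).le (sq_nonneg _)) hx.le)
      (sub_nonneg.2 hx2)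
  nlinarith [key]

lemma Hf_nonneg (x : ℝ) : 0 ≤ Hf x := by unfold Hf; positivity

lemma Hf_le {x : ℝ} (hx : 0 < x) : Hf x ≤ 64 * Real.exp (-x / 2) := by
  have he := expm1_pos hx
  rcases le_or_gt x 1 with h1 | h1
  · have hb : Hf x ≤ Real.exp x := by
      unfold Hf
      rw [div_le_iff₀ (by positivity)]
      have : x ^ 2 ≤ (Real.exp x - 1) ^ 2 := by nlinarith [expm1_ge (x := x)]
      nlinarith [Real.exp_pos x]
    have hsplit : Real.exp x = Real.exp (3 * x / 2) * Real.exp (-x / 2) := by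
      rw [← Real.exp_add]; ring_nf
    rw [hsplit] at hb
    refine hb.trans (mul_le_mul_of_nonneg_right ?_ (Real.exp_pos _).le)
    have h2 : Real.exp (3 * x / 2) ≤ Real.exp 2 := Real.exp_le_exp.2 (by linarith)
    have h3 : Real.exp 2 = Real.exp 1 * Real.exp 1 := by rw [← Real.exp_add]; norm_num
    nlinarith [Real.exp_one_lt_d9, Real.exp_pos 1]
  · have hhalf : Real.exp x / 2 ≤ Real.exp x - 1 := by
      have : (2:ℝ) ≤ Real.exp x := by nlinarith [Real.add_one_le_exp x]
      linarith
    have hprod : Real.exp (-x) * Real.exp x = 1 := by rw [← Real.exp_add]; simp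
    have hb : Hf x ≤ 4 * x ^ 2 * Real.exp (-x) := by
      unfold Hf
      rw [div_le_iff₀ (by positivity)]
      have h2 : Real.exp x ^ 2 / 4 ≤ (Real.exp x - 1) ^ 2 := by
        nlinarith [Real.exp_pos x]
      have h7 : x ^ 2 * Real.exp (-x) * Real.exp x ^ 2 = x ^ 2 * Real.exp x := by
        have h8 : x ^ 2 * Real.exp (-x) * Real.exp x ^ 2
            = x ^ 2 * Real.exp x * (Real.exp (-x) * Real.exp x) := by ring
        rw [h8, hprod, mul_one]
      nlinarith [mul_le_mul_of_nonneg_left h2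
        (mul_nonneg (sq_nonneg x) (Real.exp_pos (-x)).le), h7]
    have hx2 : x ^ 2 ≤ 16 * Real.exp (x / 2) := by
      have h4 : 1 + x / 4 ≤ Real.exp (x / 4) := by linarith [Real.add_one_le_exp (x/4)]
      have h5 : (x / 4) ^ 2 ≤ (Real.exp (x / 4)) ^ 2 := by
        apply sq_le_sq' _ (by linarith)
        nlinarith [Real.exp_pos (x/4)]
      have h6 : Real.exp (x / 4) ^ 2 = Real.exp (x / 2) := by
        rw [sq, ← Real.exp_add]; ring_nf
      nlinarith [h5, h6]
    have hfin : Real.exp (x / 2) * Real.exp (-x) = Real.exp (-x / 2) := by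
      rw [← Real.exp_add]; ring_nf
    calc Hf x ≤ 4 * x ^ 2 * Real.exp (-x) := hb
      _ ≤ 4 * (16 * Real.exp (x / 2)) * Real.exp (-x) := by
          have := (Real.exp_pos (-x)).le; nlinarith
      _ = 64 * (Real.exp (x / 2) * Real.exp (-x)) := by ring
      _ = 64 * Real.exp (-x / 2) := by rw [hfin]

lemma Hf_measurable : Measurable Hf := by unfold Hf; fun_prop

lemma Hd_measurable : Measurable Hd := by unfold Hd; fun_prop

lemma integrable_pow_exp (n : ℕ) :
    IntegrableOn (fun x : ℝ => x ^ n * Real.exp (-x / 2)) (Ioi 0) := by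
  have h := integrableOn_rpow_mul_exp_neg_mul_rpow (s := (n : ℝ)) (p := 1) (b := 1/2)
    (by exact_mod_cast neg_one_lt_zero.trans_le (Nat.cast_nonneg n)) zero_lt_one (by norm_num)
  apply h.congr_fun ?_ measurableSet_Ioi
  intro x hx
  simp only [Real.rpow_natCast, Real.rpow_one]
  rw [show -(1/2) * x = -x/2 by ring]

lemma integrableOn_Hf : IntegrableOn Hf (Ioi 0) := by
  apply Integrable.mono' ((integrable_pow_exp 0).const_mul 64)
  · exact Hf_measurable.aestronglyMeasurable
  · filter_upwards [ae_restrict_mem measurableSet_Ioi] with x hx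
    rw [Real.norm_eq_abs, abs_of_nonneg (Hf_nonneg x)]
    simpa using Hf_le hx

lemma integrableOn_Hd : IntegrableOn Hd (Ioi 0) := by
  apply Integrable.mono' ((integrable_pow_exp 0).const_mul 64)
  · exact Hd_measurable.aestronglyMeasurable
  · filter_upwards [ae_restrict_mem measurableSet_Ioi] with x hx
    rw [Real.norm_eq_abs, abs_of_nonpos (Hd_nonpos hx)]
    simpa using (neg_Hd_le_Hf hx).trans (Hf_le hx)

lemma integrableOn_pow_Hf (n : ℕ) : IntegrableOn (fun x => x ^ n * Hf x) (Ioi 0) := by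
  apply Integrable.mono' ((integrable_pow_exp n).const_mul 64)
  · exact ((measurable_id.pow_const n).mul Hf_measurable).aestronglyMeasurable
  · filter_upwards [ae_restrict_mem measurableSet_Ioi] with x hx
    rw [Real.norm_eq_abs, abs_of_nonneg (mul_nonneg (pow_nonneg (le_of_lt hx) n) (Hf_nonneg x))]
    calc x ^ n * Hf x ≤ x ^ n * (64 * Real.exp (-x / 2)) :=
          mul_le_mul_of_nonneg_left (Hf_le hx) (pow_nonneg (le_of_lt hx) n)
      _ = 64 * (x ^ n * Real.exp (-x / 2)) := by ring

lemma integrableOn_pow_Hd (n : ℕ) : IntegrableOn (fun x => x ^ n * Hd x) (Ioi 0) := by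
  apply Integrable.mono' ((integrable_pow_exp n).const_mul 64)
  · exact ((measurable_id.pow_const n).mul Hd_measurable).aestronglyMeasurable
  · filter_upwards [ae_restrict_mem measurableSet_Ioi] with x hx
    rw [Real.norm_eq_abs, abs_mul, abs_of_nonneg (pow_nonneg (le_of_lt hx) n),
      abs_of_nonpos (Hd_nonpos hx)]
    calc x ^ n * -Hd x ≤ x ^ n * (64 * Real.exp (-x / 2)) :=
          mul_le_mul_of_nonneg_left ((neg_Hd_le_Hf hx).trans (Hf_le hx))
            (pow_nonneg (le_of_lt hx) n)
      _ = 64 * (x ^ n * Real.exp (-x / 2)) := by ring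

lemma tendsto_exp_half : Tendsto (fun x : ℝ => 64 * Real.exp (-x / 2)) atTop (nhds 0) := by
  rw [show (0:ℝ) = 64 * 0 by norm_num]
  apply Tendsto.const_mul
  apply Real.tendsto_exp_atBot.comp
  apply Tendsto.atBot_div_const (by norm_num)
  exact tendsto_neg_atBot_iff.2 tendsto_id

lemma tendsto_Hf_atTop : Tendsto Hf atTop (nhds 0) := by
  apply tendsto_of_tendsto_of_tendsto_of_le_of_le' tendsto_const_nhds tendsto_exp_half
  · filter_upwards with x using Hf_nonneg x
  · filter_upwards [eventually_gt_atTop 0] with x hx using Hf_le hx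

lemma integral_Hd {b : ℝ} (hb : 0 < b) : ∫ x in Ioi b, Hd x = -Hf b := by
  have := integral_Ioi_of_hasDerivAt_of_tendsto' (f := Hf) (f' := Hd) (a := b)
    (fun x hx => hasDerivAt_Hf (lt_of_lt_of_le hb hx))
    (integrableOn_Hd.mono_set (Ioi_subset_Ioi hb.le)) tendsto_Hf_atTop
  rw [this]; ring

noncomputable def Gf (x : ℝ) : ℝ := x ^ 3 * Hf x

lemma hasDerivAt_Gf {x : ℝ} (hx : 0 < x) :
    HasDerivAt Gf (3 * x ^ 2 * Hf x + x ^ 3 * Hd x) x := by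
  unfold Gf
  have h := (hasDerivAt_pow 3 x).fun_mul (hasDerivAt_Hf hx)
  norm_num at h
  convert h using 1

lemma tendsto_Gf_atTop : Tendsto Gf atTop (nhds 0) := by
  have hbd : Tendsto (fun x : ℝ => 64 * (8 * ((x/2) ^ 3 * Real.exp (-(x/2))))) atTop (nhds 0) := by
    rw [show (0:ℝ) = 64 * (8 * 0) by norm_num]
    apply Tendsto.const_mul
    apply Tendsto.const_mul
    exact (tendsto_pow_mul_exp_neg_atTop_nhds_zero 3).comp
      (tendsto_id.atTop_div_const (by norm_num))
  apply tendsto_of_tendsto_of_tendsto_of_le_of_le' tendsto_const_nhds hbd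
  · filter_upwards [eventually_gt_atTop (0:ℝ)] with x hx
    exact mul_nonneg (by positivity) (Hf_nonneg x)
  · filter_upwards [eventually_gt_atTop (0:ℝ)] with x hx
    have := mul_le_mul_of_nonneg_left (Hf_le hx) (by positivity : (0:ℝ) ≤ x ^ 3)
    calc Gf x ≤ x ^ 3 * (64 * Real.exp (-x/2)) := this
      _ = 64 * (8 * ((x/2) ^ 3 * Real.exp (-(x/2)))) := by rw [show -(x/2) = -x/2 by ring]; ring

lemma integrableOn_Gd {b : ℝ} (hb : 0 ≤ b) :
    IntegrableOn (fun x => 3 * x ^ 2 * Hf x + x ^ 3 * Hd x) (Ioi b) := by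
  have h1 := ((integrableOn_pow_Hf 2).mono_set (Ioi_subset_Ioi hb)).const_mul (3:ℝ)
  have h2 := (integrableOn_pow_Hd 3).mono_set (Ioi_subset_Ioi hb)
  have h3 : IntegrableOn (fun x => 3 * (x ^ 2 * Hf x) + x ^ 3 * Hd x) (Ioi b) := by
    have h4 := h1.add h2; exact h4
  simpa [mul_assoc] using h3

lemma integral_Gd {b : ℝ} (hb : 0 < b) :
    ∫ x in Ioi b, (3 * x ^ 2 * Hf x + x ^ 3 * Hd x) = -Gf b := by
  rw [integral_Ioi_of_hasDerivAt_of_tendsto'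
    (fun x hx => hasDerivAt_Gf (lt_of_lt_of_le hb hx)) (integrableOn_Gd hb.le)
    tendsto_Gf_atTop]
  ring

lemma hasSum_Hf {x : ℝ} (hx : 0 < x) :
    HasSum (fun n : ℕ => (n : ℝ) * (x ^ 4 * Real.exp (-(n * x)))) (x ^ 2 * Hf x) := by
  have hr : ‖Real.exp (-x)‖ < 1 := by
    rw [Real.norm_eq_abs, abs_of_pos (Real.exp_pos _)]
    exact Real.exp_lt_one_iff.2 (by linarith)
  have hs := (hasSum_coe_mul_geometric_of_norm_lt_one hr).mul_left (x ^ 4)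
  have he := expm1_pos hx
  have hne : Real.exp x ≠ 0 := (Real.exp_pos x).ne'
  have hfun : (fun n : ℕ => (n : ℝ) * (x ^ 4 * Real.exp (-(n * x))))
      = fun n : ℕ => x ^ 4 * ((n : ℝ) * Real.exp (-x) ^ n) := by
    funext n
    rw [show -((n:ℝ) * x) = (n : ℝ) * (-x) by ring, Real.exp_nat_mul]
    ring
  have hval : x ^ 2 * Hf x = x ^ 4 * (Real.exp (-x) / (1 - Real.exp (-x)) ^ 2) := by
    unfold Hf
    rw [Real.exp_neg]
    field_simp
  rw [hfun, hval]
  exact hs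

lemma integral_x4_exp (n : ℕ) :
    ∫ x in Ioi (0:ℝ), x ^ 4 * Real.exp (-((n+1) * x)) = 24 / ((n:ℝ)+1) ^ 5 := by
  have hn : (0:ℝ) < (n:ℝ) + 1 := by positivity
  have h := integral_rpow_mul_exp_neg_mul_Ioi (a := 5) (r := ((n:ℝ)+1)) (by norm_num) hn
  rw [show ∫ x in Ioi (0:ℝ), x ^ 4 * Real.exp (-((n+1) * x))
      = ∫ t in Ioi (0:ℝ), t ^ ((5:ℝ)-1) * Real.exp (-(((n:ℝ)+1) * t)) from
    setIntegral_congr_fun measurableSet_Ioi (fun t ht => by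
      rw [show (5:ℝ)-1 = ((4:ℕ):ℝ) by norm_num, Real.rpow_natCast]), h]
  rw [show (5:ℝ) = ((4:ℕ):ℝ)+1 by norm_num, Real.Gamma_nat_eq_factorial,
    show ((4:ℕ):ℝ)+1 = ((5:ℕ):ℝ) by norm_num, Real.rpow_natCast]
  simp [Nat.factorial]
  ring

lemma integrableOn_f (n : ℕ) :
    IntegrableOn (fun x : ℝ => (n:ℝ) * (x ^ 4 * Real.exp (-(n * x)))) (Ioi 0) := by
  cases n with
  | zero => simpa using (integrableOn_zero (μ := volume) (s := Ioi (0:ℝ)) (E := ℝ))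
  | succ m =>
    apply Integrable.const_mul
    have h := integrableOn_rpow_mul_exp_neg_mul_rpow (s := (4:ℝ)) (p := 1)
      (b := (m:ℝ)+1) (by norm_num) zero_lt_one (by positivity)
    apply h.congr_fun ?_ measurableSet_Ioi
    intro x hx
    simp only [Real.rpow_one, show (4:ℝ) = ((4:ℕ):ℝ) by norm_num, Real.rpow_natCast]
    push_cast
    ring_nf

lemma integral_f (n : ℕ) :
    ∫ x in Ioi (0:ℝ), (n:ℝ) * (x ^ 4 * Real.exp (-(n * x))) = 24 / (n:ℝ) ^ 4 := by
  cases n with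
  | zero => simp
  | succ m =>
    rw [MeasureTheory.integral_const_mul]
    have := integral_x4_exp m
    push_cast
    rw [this]
    have hm : ((m:ℝ)+1) ≠ 0 := by positivity
    field_simp

lemma integral_x2_Hf : ∫ x in Ioi (0:ℝ), x ^ 2 * Hf x = 4 * π ^ 4 / 15 := by
  have hmeas : ∀ n : ℕ, AEStronglyMeasurable
      (fun x : ℝ => (n:ℝ) * (x ^ 4 * Real.exp (-(n * x)))) (volume.restrict (Ioi 0)) :=
    fun n => ((measurable_const.mul ((measurable_id.pow_const 4).mul
      (((measurable_const.mul measurable_id).neg).exp))).aestronglyMeasurable)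
  have hlint : ∀ n : ℕ, (∫⁻ x in Ioi (0:ℝ), ‖(n:ℝ) * (x ^ 4 * Real.exp (-(n * x)))‖₊ ∂volume)
      = ENNReal.ofReal (24 / (n:ℝ) ^ 4) := by
    intro n
    rw [← integral_f n, ofReal_integral_eq_lintegral_ofReal (integrableOn_f n) ?_]
    · apply lintegral_congr_ae
      filter_upwards [ae_restrict_mem measurableSet_Ioi] with x hx
      rw [← enorm_eq_nnnorm, Real.enorm_eq_ofReal (by positivity)]
    · filter_upwards [ae_restrict_mem measurableSet_Ioi] with x hx
      positivity
  have hsumm : Summable (fun n : ℕ => 24 / (n:ℝ) ^ 4) := by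
    have := (summable_one_div_nat_pow (p := 4)).2 (by norm_num)
    have h2 := this.mul_left (24:ℝ)
    apply h2.congr
    intro n
    ring
  have hne : (∑' n : ℕ, ∫⁻ x in Ioi (0:ℝ), ‖(n:ℝ) * (x ^ 4 * Real.exp (-(n * x)))‖₊ ∂volume) ≠ ⊤ := by
    rw [tsum_congr hlint, ← ENNReal.ofReal_tsum_of_nonneg (fun n => by positivity) hsumm]
    exact ENNReal.ofReal_ne_top
  have key := integral_tsum (μ := volume.restrict (Ioi (0:ℝ)))
    (f := fun (n : ℕ) (x : ℝ) => (n:ℝ) * (x ^ 4 * Real.exp (-(n * x)))) hmeas hne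
  have heq : ∫ x in Ioi (0:ℝ), x ^ 2 * Hf x
      = ∫ x in Ioi (0:ℝ), ∑' n : ℕ, (n:ℝ) * (x ^ 4 * Real.exp (-(n * x))) :=
    setIntegral_congr_fun measurableSet_Ioi (fun x hx => ((hasSum_Hf hx).tsum_eq).symm)
  rw [heq, key]
  have : (fun n : ℕ => ∫ x in Ioi (0:ℝ), (n:ℝ) * (x ^ 4 * Real.exp (-(n * x))))
      = fun n : ℕ => 24 * (1 / (n:ℝ) ^ 4) := by
    funext n; rw [integral_f n]; ring
  rw [this, (hasSum_zeta_four.mul_left 24).tsum_eq]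
  ring

lemma Hf_le_exp {x : ℝ} (hx : 0 < x) : Hf x ≤ Real.exp x := by
  have he := expm1_pos hx
  unfold Hf
  rw [div_le_iff₀ (by positivity)]
  have : x ^ 2 ≤ (Real.exp x - 1) ^ 2 := by nlinarith [expm1_ge (x := x)]
  nlinarith [Real.exp_pos x]

lemma integral_x3_Hd : ∫ x in Ioi (0:ℝ), x ^ 3 * Hd x = -(4 * π ^ 4 / 5) := by
  set g : ℝ → ℝ := fun x => 3 * x ^ 2 * Hf x + x ^ 3 * Hd x with hg
  have hb : ∀ n : ℕ, (0:ℝ) < 1 / (n + 1) := fun n => by positivity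
  have hmono : Monotone (fun n : ℕ => Ioi ((1:ℝ) / (n + 1))) := by
    intro n m hnm
    apply Ioi_subset_Ioi
    apply one_div_le_one_div_of_le (by positivity)
    exact_mod_cast by omega
  have hunion : (⋃ n : ℕ, Ioi ((1:ℝ) / (n + 1))) = Ioi (0:ℝ) := by
    ext x
    simp only [mem_iUnion, mem_Ioi]
    constructor
    · rintro ⟨n, hn⟩; exact lt_trans (hb n) hn
    · intro hx
      obtain ⟨n, hn⟩ := exists_nat_one_div_lt hx
      exact ⟨n, hn⟩
  have htend := tendsto_setIntegral_of_monotone (μ := volume) (f := g)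
    (fun n : ℕ => measurableSet_Ioi) hmono (by rw [hunion]; exact integrableOn_Gd le_rfl)
  rw [hunion] at htend
  have heval : ∀ n : ℕ, ∫ x in Ioi ((1:ℝ)/(n+1)), g x = -Gf (1/(n+1)) :=
    fun n => integral_Gd (hb n)
  have htend2 : Tendsto (fun n : ℕ => -Gf ((1:ℝ)/(n+1))) atTop (nhds 0) := by
    rw [show (0:ℝ) = -0 by norm_num]
    apply Tendsto.neg
    have hseq : Tendsto (fun n : ℕ => (1:ℝ)/(n+1)) atTop (nhds 0) :=
      tendsto_one_div_add_atTop_nhds_zero_nat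
    have hcube : Tendsto (fun n : ℕ => Real.exp 1 * ((1:ℝ)/(n+1)) ^ 3) atTop (nhds 0) := by
      rw [show (0:ℝ) = Real.exp 1 * 0 ^ 3 by norm_num]
      exact ((hseq.pow 3).const_mul _)
    apply tendsto_of_tendsto_of_tendsto_of_le_of_le' tendsto_const_nhds hcube
    · filter_upwards with n
      exact mul_nonneg (by positivity) (Hf_nonneg _)
    · filter_upwards with n
      have h1 : (1:ℝ)/(n+1) ≤ 1 := by
        rw [div_le_one (by positivity)]; linarith [Nat.cast_nonneg (α := ℝ) n]
      have h2 := (Hf_le_exp (hb n)).trans (Real.exp_le_exp.2 h1)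
      unfold Gf
      calc ((1:ℝ)/(n+1)) ^ 3 * Hf (1/(n+1)) ≤ (1/(n+1) : ℝ) ^ 3 * Real.exp 1 :=
            mul_le_mul_of_nonneg_left h2 (by positivity)
        _ = Real.exp 1 * ((1:ℝ)/(n+1)) ^ 3 := by ring
  have hzero : ∫ x in Ioi (0:ℝ), g x = 0 :=
    tendsto_nhds_unique (htend.congr heval) htend2
  have hint1 : IntegrableOn (fun x : ℝ => 3 * x ^ 2 * Hf x) (Ioi 0) := by
    have h4 : IntegrableOn (fun x => 3 * (x ^ 2 * Hf x)) (Ioi 0) := by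
      have h5 := (integrableOn_pow_Hf 2).const_mul (3:ℝ); exact h5
    simpa [mul_assoc] using h4
  have hsplit : ∫ x in Ioi (0:ℝ), g x
      = (∫ x in Ioi (0:ℝ), 3 * x ^ 2 * Hf x) + ∫ x in Ioi (0:ℝ), x ^ 3 * Hd x :=
    integral_add hint1 (integrableOn_pow_Hd 3)
  have h3 : ∫ x in Ioi (0:ℝ), 3 * x ^ 2 * Hf x = 4 * π ^ 4 / 5 := by
    simp_rw [mul_assoc]
    rw [MeasureTheory.integral_const_mul, integral_x2_Hf]
    ring
  rw [hzero, h3] at hsplit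
  linarith

lemma phi_finite (φ : StieltjesFunction ℝ) (hzero : ∀ x ≤ (0 : ℝ), φ x = 0)
    (hbdd : ∃ M : ℝ, ∀ x, φ x ≤ M) : IsFiniteMeasure φ.measure := by
  obtain ⟨M, hM⟩ := hbdd
  have htop : Tendsto φ atTop (nhds (⨆ n : ℝ, φ n)) :=
    tendsto_atTop_ciSup φ.mono ⟨M, by rintro y ⟨x, rfl⟩; exact hM x⟩
  have hbot : Tendsto φ atBot (nhds 0) := by
    apply tendsto_const_nhds.congr'
    filter_upwards [eventually_le_atBot (0:ℝ)] with x hx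
    exact (hzero x hx).symm
  exact φ.isFiniteMeasure hbot htop

lemma fubini_step (φ : StieltjesFunction ℝ) (hnonneg : ∀ x, 0 ≤ φ x)
    (hzero : ∀ x ≤ (0 : ℝ), φ x = 0) (hbdd : ∃ M : ℝ, ∀ x, φ x ≤ M)
    {a : ℝ} (ha : 0 < a) :
    ∫ l in Ioi (0:ℝ), Hf (Real.sqrt l / a) ∂φ.measure
      = -∫ x in Ioi (0:ℝ), Hd x * φ (a ^ 2 * x ^ 2) := by
  haveI := phi_finite φ hzero hbdd
  set μ := φ.measure.restrict (Ioi 0) with hμ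
  set ν := volume.restrict (Ioi (0:ℝ)) with hν
  set S : Set (ℝ × ℝ) := {p | Real.sqrt p.1 / a ≤ p.2} with hS
  have hSmeas : MeasurableSet S :=
    measurableSet_le ((Real.continuous_sqrt.comp continuous_fst).div_const a).measurable
      measurable_snd
  set F : ℝ × ℝ → ℝ := S.indicator (fun p => Hd p.2) with hF
  have hFmeas : Measurable F := (Hd_measurable.comp measurable_snd).indicator hSmeas
  -- as a function of x for fixed l
  have hsec : ∀ l : ℝ, (fun x => F (l, x)) = (Ici (Real.sqrt l / a)).indicator Hd := by
    intro l; funext x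
    simp only [hF]
    by_cases hx : Real.sqrt l / a ≤ x
    · rw [indicator_of_mem (by exact hx : (l,x) ∈ S), indicator_of_mem (by exact hx)]
    · rw [indicator_of_notMem (by exact hx : ¬ (l,x) ∈ S), indicator_of_notMem (by exact hx)]
  -- integrability of F on product
  have hFaesm : AEStronglyMeasurable F (μ.prod ν) := hFmeas.aestronglyMeasurable
  have hHdν : Integrable Hd ν := integrableOn_Hd
  have hFint : Integrable F (μ.prod ν) := by
    rw [integrable_prod_iff hFaesm]
    constructor
    · filter_upwards with l
      rw [hsec l]
      exact hHdν.indicator measurableSet_Ici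
    · apply Integrable.mono' (integrable_const (∫ x, ‖Hd x‖ ∂ν))
      · exact (hFmeas.norm.aestronglyMeasurable.integral_prod_right')
      · filter_upwards with l
        rw [Real.norm_eq_abs, abs_of_nonneg (integral_nonneg (fun x => norm_nonneg _))]
        have hi : Integrable (fun y => F (l, y)) ν := by
          rw [hsec l]; exact hHdν.indicator measurableSet_Ici
        apply integral_mono hi.norm hHdν.norm
        intro y
        simp only [hF]
        exact norm_indicator_le_norm_self _ _
  have hswap := integral_integral_swap (f := fun l x => F (l, x)) (μ := μ) (ν := ν)
    (by exact hFint)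
  -- evaluate left side
  have hleft : ∫ l, (∫ x, F (l, x) ∂ν) ∂μ = ∫ l in Ioi (0:ℝ), -Hf (Real.sqrt l / a) ∂φ.measure := by
    rw [hμ]
    apply setIntegral_congr_fun measurableSet_Ioi
    intro l hl
    dsimp only
    have hc : 0 < Real.sqrt l / a := div_pos (Real.sqrt_pos.2 hl) ha
    rw [hsec l, hν, integral_indicator measurableSet_Ici,
      Measure.restrict_restrict measurableSet_Ici,
      show Ici (Real.sqrt l / a) ∩ Ioi 0 = Ici (Real.sqrt l / a) by
        rw [inter_eq_left]; exact fun y hy => lt_of_lt_of_le hc hy,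
      integral_Ici_eq_integral_Ioi, integral_Hd hc]
  -- evaluate right side
  have hright : ∫ x, (∫ l, F (l, x) ∂μ) ∂ν = ∫ x in Ioi (0:ℝ), Hd x * φ (a ^ 2 * x ^ 2) := by
    rw [hν]
    apply setIntegral_congr_fun measurableSet_Ioi
    intro x hx
    dsimp only
    have hax : 0 < a * x := mul_pos ha hx
    have hsetl : (fun l => F (l, x)) = (Iic (a ^ 2 * x ^ 2)).indicator (fun _ => Hd x) := by
      funext l
      simp only [hF]
      have hiff : (l, x) ∈ S ↔ l ∈ Iic (a ^ 2 * x ^ 2) := by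
        simp only [hS, mem_setOf_eq, mem_Iic, div_le_iff₀ ha]
        rw [show x * a = a * x by ring, Real.sqrt_le_iff]
        constructor
        · rintro ⟨_, h2⟩; nlinarith
        · intro hl; exact ⟨hax.le, by nlinarith⟩
      by_cases hmem : (l, x) ∈ S
      · rw [indicator_of_mem hmem, indicator_of_mem (hiff.1 hmem)]
      · rw [indicator_of_notMem hmem, indicator_of_notMem (fun c => hmem (hiff.2 c))]
    rw [hsetl, hμ, integral_indicator measurableSet_Iic,
      Measure.restrict_restrict measurableSet_Iic, setIntegral_const,
      show Iic (a ^ 2 * x ^ 2) ∩ Ioi 0 = Ioc 0 (a ^ 2 * x ^ 2) by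
        rw [inter_comm, Ioi_inter_Iic],
      measureReal_def, StieltjesFunction.measure_Ioc, hzero 0 le_rfl, sub_zero,
      ENNReal.toReal_ofReal (hnonneg _), smul_eq_mul, mul_comm]
  rw [hleft, hright] at hswap
  rw [← hswap, integral_neg]
  ring

lemma sq_rpow_three_halves {v : ℝ} (hv : 0 ≤ v) : (v ^ 2 : ℝ) ^ ((3:ℝ)/2) = v ^ 3 := by
  rw [← Real.rpow_natCast v 2, ← Real.rpow_mul hv, show ((2:ℕ):ℝ) * ((3:ℝ)/2) = ((3:ℕ):ℝ) by norm_num,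
    Real.rpow_natCast]

lemma phi_bound_s10 (φ : StieltjesFunction ℝ) (hnonneg : ∀ x, 0 ≤ φ x)
    (hbdd : ∃ M : ℝ, ∀ x, φ x ≤ M) (c₀ : ℝ) (hc₀ : 0 < c₀)
    (hasymp : Tendsto (fun l : ℝ => φ l / l ^ ((3 : ℝ) / 2)) (nhdsWithin 0 (Set.Ioi 0))
      (nhds c₀)) :
    ∃ C : ℝ, 0 < C ∧ ∀ l : ℝ, 0 < l → φ l ≤ C * l ^ ((3:ℝ)/2) := by
  have hev := hasymp.eventually (eventually_le_nhds (lt_add_one c₀))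
  rw [eventually_nhdsWithin_iff] at hev
  obtain ⟨δ, hδpos, hδ⟩ := Metric.eventually_nhds_iff.1 hev
  obtain ⟨M, hM⟩ := hbdd
  have hM0 : 0 ≤ M := le_trans (hnonneg 0) (hM 0)
  have hd2 : (0:ℝ) < (δ/2) ^ ((3:ℝ)/2) := Real.rpow_pos_of_pos (by linarith) _
  refine ⟨max (c₀ + 1) ((M + 1) / (δ/2) ^ ((3:ℝ)/2)), lt_max_of_lt_left (by linarith), ?_⟩
  intro l hl
  have hl32 : (0:ℝ) < l ^ ((3:ℝ)/2) := Real.rpow_pos_of_pos hl _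
  rcases lt_or_ge l δ with hcase | hcase
  · have hdl : dist l 0 < δ := by rw [Real.dist_eq, sub_zero, abs_of_pos hl]; exact hcase
    have := hδ hdl hl
    rw [div_le_iff₀ hl32] at this
    calc φ l ≤ (c₀ + 1) * l ^ ((3:ℝ)/2) := this
      _ ≤ _ := mul_le_mul_of_nonneg_right (le_max_left _ _) hl32.le
  · have h1 : (δ/2) ^ ((3:ℝ)/2) ≤ l ^ ((3:ℝ)/2) :=
      Real.rpow_le_rpow (by linarith) (by linarith) (by norm_num)
    calc φ l ≤ M := hM l
      _ = (M + 1) / (δ/2) ^ ((3:ℝ)/2) * (δ/2) ^ ((3:ℝ)/2) - 1 := by field_simp; ring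
      _ ≤ (M + 1) / (δ/2) ^ ((3:ℝ)/2) * l ^ ((3:ℝ)/2) := by
          have := mul_le_mul_of_nonneg_left h1 (by positivity : (0:ℝ) ≤ (M+1)/(δ/2)^((3:ℝ)/2))
          linarith
      _ ≤ _ := mul_le_mul_of_nonneg_right (le_max_right _ _) hl32.le

theorem stmt10 (φ : StieltjesFunction ℝ) (hnonneg : ∀ x, 0 ≤ φ x)
    (hzero : ∀ x ≤ (0 : ℝ), φ x = 0)
    (hbdd : ∃ M : ℝ, ∀ x, φ x ≤ M)
    (c₀ : ℝ) (hc₀ : 0 < c₀)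
    (hasymp : Tendsto (fun l : ℝ => φ l / l ^ ((3 : ℝ) / 2)) (nhdsWithin 0 (Set.Ioi 0))
      (nhds c₀))
    (h K : ℝ) (hh : 0 < h) (hK : 0 < K) :
    Tendsto (fun T : ℝ =>
        (∫ l in Set.Ioi (0 : ℝ),
          (h ^ 2 * l / (K * T ^ 2)) * Real.exp (h * Real.sqrt l / (K * T)) /
            (Real.exp (h * Real.sqrt l / (K * T)) - 1) ^ 2 ∂φ.measure) / T ^ 3)
      (nhdsWithin 0 (Set.Ioi 0))
      (nhds (4 * π ^ 4 / 5 * c₀ * K ^ 4 / h ^ 3)) := by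
  obtain ⟨C, hC, hCb⟩ := phi_bound_s10 φ hnonneg hbdd c₀ hc₀ hasymp
  have hφmeas : Measurable (fun y : ℝ => (φ y : ℝ)) := φ.mono.measurable
  set L : ℝ → ℝ := fun x => (-(K^4) * c₀ / h^3) * (x ^ 3 * Hd x) with hL
  set F : ℝ → ℝ → ℝ := fun T x => (-K / T^3) * (Hd x * φ ((K*T/h)^2 * x^2)) with hFdef
  have hbound_int : Integrable (fun x => (K * C * (K/h)^3) * -(x ^ 3 * Hd x))
      (volume.restrict (Ioi 0)) := ((integrableOn_pow_Hd 3).neg.const_mul _)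
  have hmain : Tendsto (fun T : ℝ => ∫ x in Ioi (0:ℝ), F T x)
      (nhdsWithin 0 (Set.Ioi 0)) (nhds (∫ x in Ioi (0:ℝ), L x)) := by
    apply tendsto_integral_filter_of_dominated_convergence
      (bound := fun x => (K * C * (K/h)^3) * -(x ^ 3 * Hd x)) ?_ ?_ hbound_int ?_
    · filter_upwards with T
      exact ((Hd_measurable.mul (hφmeas.comp
        ((measurable_id.pow_const 2).const_mul ((K*T/h)^2)))).const_mul _).aestronglyMeasurable
    · filter_upwards [self_mem_nhdsWithin] with T hT
      have hT : (0:ℝ) < T := hT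
      filter_upwards [ae_restrict_mem measurableSet_Ioi] with x hx
      have hx : (0:ℝ) < x := hx
      have h32 : ((K*T/h)^2 * x^2) ^ ((3:ℝ)/2) = (K*T*x/h)^3 := by
        rw [show (K*T/h)^2 * x^2 = (K*T*x/h)^2 by ring,
          sq_rpow_three_halves (by positivity)]
      have hφu : φ ((K*T/h)^2 * x^2) ≤ C * (K*T*x/h)^3 := by
        have := hCb _ (by positivity : (0:ℝ) < (K*T/h)^2 * x^2)
        rwa [h32] at this
      have hHd := Hd_nonpos hx
      have hφn := hnonneg ((K*T/h)^2 * x^2)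
      have hsign : (0:ℝ) ≤ (-K / T^3) * (Hd x * φ ((K*T/h)^2 * x^2)) := by
        have h1 : -K / T^3 ≤ 0 := by
          rw [neg_div]; simp only [Left.neg_nonpos_iff]; positivity
        have h2 : Hd x * φ ((K*T/h)^2 * x^2) ≤ 0 := by nlinarith
        nlinarith [mul_nonneg (neg_nonneg.2 h1) (neg_nonneg.2 h2)]
      rw [hFdef, Real.norm_eq_abs, abs_of_nonneg hsign]
      calc (-K / T^3) * (Hd x * φ ((K*T/h)^2 * x^2))
          = (K / T^3) * ((-Hd x) * φ ((K*T/h)^2 * x^2)) := by ring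
        _ ≤ (K / T^3) * ((-Hd x) * (C * (K*T*x/h)^3)) :=
            mul_le_mul_of_nonneg_left
              (mul_le_mul_of_nonneg_left hφu (neg_nonneg.2 hHd)) (by positivity)
        _ = (K * C * (K/h)^3) * -(x ^ 3 * Hd x) := by field_simp
    · filter_upwards [ae_restrict_mem measurableSet_Ioi] with x hx
      have hx : (0:ℝ) < x := hx
      have hcont : Tendsto (fun T : ℝ => (K*T/h)^2 * x^2) (nhds 0) (nhds 0) := by
        have hc : Continuous fun T : ℝ => (K*T/h)^2 * x^2 := by continuity
        have := hc.tendsto 0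
        simpa using this
      have hu : Tendsto (fun T : ℝ => (K*T/h)^2 * x^2) (nhdsWithin 0 (Set.Ioi 0))
          (nhdsWithin 0 (Set.Ioi 0)) := by
        rw [tendsto_nhdsWithin_iff]
        refine ⟨hcont.mono_left nhdsWithin_le_nhds, ?_⟩
        filter_upwards [self_mem_nhdsWithin] with T hT
        have hT : (0:ℝ) < T := hT
        exact mem_Ioi.2 (by positivity)
      have hratio := hasymp.comp hu
      have hfin := hratio.mul_const ((K*x/h)^3 * (-K * Hd x))
      have heq : (fun T : ℝ => φ ((K*T/h)^2 * x^2) / ((K*T/h)^2 * x^2) ^ ((3:ℝ)/2)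
            * ((K*x/h)^3 * (-K * Hd x)))
          =ᶠ[nhdsWithin 0 (Set.Ioi 0)] fun T => F T x := by
        filter_upwards [self_mem_nhdsWithin] with T hT
        have hT : (0:ℝ) < T := hT
        have h32 : ((K*T/h)^2 * x^2) ^ ((3:ℝ)/2) = (K*T*x/h)^3 := by
          rw [show (K*T/h)^2 * x^2 = (K*T*x/h)^2 by ring,
            sq_rpow_three_halves (by positivity)]
        rw [h32, hFdef]
        field_simp
      have := Tendsto.congr' heq hfin
      rwa [show c₀ * ((K*x/h)^3 * (-K * Hd x)) = L x by rw [hL]; field_simp] at this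
  have hLval : ∫ x in Ioi (0:ℝ), L x = 4 * π ^ 4 / 5 * c₀ * K ^ 4 / h ^ 3 := by
    rw [hL, MeasureTheory.integral_const_mul, integral_x3_Hd]
    field_simp
  have hEq : (fun T : ℝ => ∫ x in Ioi (0:ℝ), F T x)
      =ᶠ[nhdsWithin 0 (Set.Ioi 0)] fun T : ℝ =>
        (∫ l in Set.Ioi (0 : ℝ),
          (h ^ 2 * l / (K * T ^ 2)) * Real.exp (h * Real.sqrt l / (K * T)) /
            (Real.exp (h * Real.sqrt l / (K * T)) - 1) ^ 2 ∂φ.measure) / T ^ 3 := by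
    filter_upwards [self_mem_nhdsWithin] with T hT
    have hT : (0:ℝ) < T := hT
    have ha : (0:ℝ) < K * T / h := by positivity
    have hcongr : ∫ l in Set.Ioi (0 : ℝ),
          (h ^ 2 * l / (K * T ^ 2)) * Real.exp (h * Real.sqrt l / (K * T)) /
            (Real.exp (h * Real.sqrt l / (K * T)) - 1) ^ 2 ∂φ.measure
        = ∫ l in Set.Ioi (0:ℝ), K * Hf (Real.sqrt l / (K * T / h)) ∂φ.measure := by
      apply setIntegral_congr_fun measurableSet_Ioi
      intro l hl
      have hl : (0:ℝ) < l := hl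
      dsimp only
      rw [show Real.sqrt l / (K * T / h) = h * Real.sqrt l / (K * T) by field_simp]
      unfold Hf
      rw [show (h * Real.sqrt l / (K * T)) ^ 2 = h^2 * l / (K^2 * T^2) by
        rw [div_pow, mul_pow, Real.sq_sqrt hl.le]; ring_nf]
      rw [show h ^ 2 * l / (K * T ^ 2) = K * (h^2 * l / (K^2 * T^2)) by field_simp]
      ring
    rw [hFdef]
    simp only
    rw [MeasureTheory.integral_const_mul, hcongr, MeasureTheory.integral_const_mul,
      fubini_step φ hnonneg hzero hbdd ha]
    ring
  have := hmain.congr' hEq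
  rwa [hLval] at this
end
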